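/- arXiv:2605.04630 — 9 statements merged into one kernel-verified Lean document; each statement's English description precedes it below -/
import Mathlib

section
/- Let K be a semiring. (i) For every a ∈ P_{m,n}, the matrix of the involution is the transpose: (a*)‾ = āᵀ, i.e. (a*)‾_{Y,X} = ā_{X,Y} for all Finsets X of Fin m and Y of Fin n. (ii) For all a ∈ P_{m,n}, b ∈ P_{s,t} and all Finsets X ⊆ Fin m, Y ⊆ Fin n, U ⊆ Fin s, V ⊆ Fin t, one has (a ⊞ b)‾_{P,Q} = ā_{X,Y} * b̄_{U,V}, where P ⊆ Fin (m+s) is the Finset corresponding to the pair (X,U) under finSumFinEquiv : Fin m ⊕ Fin s ≃ Fin (m+s), and Q ⊆ Fin (n+t) corresponds to (Y,V) under finSumFinEquiv : Fin n ⊕ Fin t ≃ Fin (n+t); in other words, a ↦ ā sends tensor sums of partitions to Kronecker products of matrices. -/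
open Classical

/-- A partition in `P_{m,n}`: an equivalence relation on `Fin m ⊕ Fin n`. -/
abbrev Ptn (m n : ℕ) := Setoid (Fin m ⊕ Fin n)

/-- `(X,Y)` is a union of `a`-blocks. -/
def IsUnionOfBlocks {m n : ℕ} (a : Ptn m n) (X : Finset (Fin m)) (Y : Finset (Fin n)) :
    Prop :=
  ∀ u v, a.r u v →
    (u ∈ Sum.inl '' (X : Set (Fin m)) ∪ Sum.inr '' (Y : Set (Fin n)) ↔
     v ∈ Sum.inl '' (X : Set (Fin m)) ∪ Sum.inr '' (Y : Set (Fin n)))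

/-- The zero-one matrix `ā` associated to a partition `a`. -/
noncomputable def ptnMatrix (K : Type) [Semiring K] {m n : ℕ} (a : Ptn m n) :
    Matrix (Finset (Fin m)) (Finset (Fin n)) K :=
  Matrix.of fun X Y => if IsUnionOfBlocks a X Y then (1 : K) else 0

/-- The involution `a*` of a partition. -/
def ptnStar {m n : ℕ} (a : Ptn m n) : Ptn n m :=
  Setoid.comap Sum.swap a

/-- First projection used to define the tensor sum. -/
def tensorProj₁ {m n s t : ℕ} :
    (Fin m ⊕ Fin s) ⊕ (Fin n ⊕ Fin t) → Option (Fin m ⊕ Fin n)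
  | Sum.inl (Sum.inl i) => some (Sum.inl i)
  | Sum.inl (Sum.inr _) => none
  | Sum.inr (Sum.inl j) => some (Sum.inr j)
  | Sum.inr (Sum.inr _) => none

/-- Second projection used to define the tensor sum. -/
def tensorProj₂ {m n s t : ℕ} :
    (Fin m ⊕ Fin s) ⊕ (Fin n ⊕ Fin t) → Option (Fin s ⊕ Fin t)
  | Sum.inl (Sum.inl _) => none
  | Sum.inl (Sum.inr i) => some (Sum.inl i)
  | Sum.inr (Sum.inl _) => none
  | Sum.inr (Sum.inr j) => some (Sum.inr j)

/-- The tensor sum `a ⊞ b` of partitions. -/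
def ptnTensor {m n s t : ℕ} (a : Ptn m n) (b : Ptn s t) : Ptn (m + s) (n + t) :=
  Setoid.comap (Sum.map finSumFinEquiv.symm finSumFinEquiv.symm)
    (Relation.EqvGen.setoid fun u v =>
      (∃ p q, tensorProj₁ u = some p ∧ tensorProj₁ v = some q ∧ a.r p q) ∨
      (∃ p q, tensorProj₂ u = some p ∧ tensorProj₂ v = some q ∧ b.r p q))

/-- The generating relation of the product graph `Π(a,b)`. -/
def prodGen {m n t : ℕ} (a : Ptn m n) (b : Ptn n t) :
    (Fin m ⊕ Fin n ⊕ Fin t) → (Fin m ⊕ Fin n ⊕ Fin t) → Prop :=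
  fun u v =>
    (∃ p q, a.r p q ∧ u = Sum.map id Sum.inl p ∧ v = Sum.map id Sum.inl q) ∨
    (∃ p q, b.r p q ∧ u = Sum.inr p ∧ v = Sum.inr q)

/-- The equivalence `∼` on `Fin m ⊕ Fin n ⊕ Fin t` generated by `a` and `b`. -/
def prodSetoid {m n t : ℕ} (a : Ptn m n) (b : Ptn n t) :
    Setoid (Fin m ⊕ Fin n ⊕ Fin t) :=
  Relation.EqvGen.setoid (prodGen a b)

/-- The product `ab` of composable partitions. -/
def ptnMul {m n t : ℕ} (a : Ptn m n) (b : Ptn n t) : Ptn m t :=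
  Setoid.comap (Sum.map id Sum.inr) (prodSetoid a b)

/-- The twisting number `Φ(a,b)`: the number of `∼`-classes contained in the middle copy. -/
noncomputable def Phi {m n t : ℕ} (a : Ptn m n) (b : Ptn n t) : ℕ :=
  Nat.card {C : Quotient (prodSetoid a b) //
    ∀ u, Quotient.mk (prodSetoid a b) u = C → ∃ j : Fin n, u = Sum.inr (Sum.inl j)}

/-- The identity partition `ι_n`. -/
def idPtn (n : ℕ) : Ptn n n :=
  Relation.EqvGen.setoid fun u v => ∃ i : Fin n, u = Sum.inl i ∧ v = Sum.inr i

/-- `X` is a union of `ker(a)`-classes. -/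
def KerClosed {m n : ℕ} (a : Ptn m n) (X : Finset (Fin m)) : Prop :=
  ∀ x ∈ X, ∀ i : Fin m, a.r (Sum.inl x) (Sum.inl i) → i ∈ X

/-- `Y` is a union of `coker(a)`-classes. -/
def CokerClosed {m n : ℕ} (a : Ptn m n) (Y : Finset (Fin n)) : Prop :=
  ∀ y ∈ Y, ∀ j : Fin n, a.r (Sum.inr y) (Sum.inr j) → j ∈ Y

/-- The image `Xa` of `X` under `a`. -/
noncomputable def ptnImage {m n : ℕ} (a : Ptn m n) (X : Finset (Fin m)) :
    Finset (Fin n) :=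
  Finset.univ.filter fun j => ∃ x ∈ X, a.r (Sum.inl x) (Sum.inr j)

/-- The preimage `aY` of `Y` under `a`. -/
noncomputable def ptnPreimage {m n : ℕ} (a : Ptn m n) (Y : Finset (Fin n)) :
    Finset (Fin m) :=
  Finset.univ.filter fun i => ∃ y ∈ Y, a.r (Sum.inl i) (Sum.inr y)

/-- `Z` is an intertwining set for `(a,b)` with respect to `(X,Y)`. -/
def Intertwining {m n t : ℕ} (a : Ptn m n) (b : Ptn n t)
    (X : Finset (Fin m)) (Y : Finset (Fin t)) (Z : Finset (Fin n)) : Prop :=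
  IsUnionOfBlocks a X Z ∧ IsUnionOfBlocks b Z Y

/-- A Brauer partition: every block has exactly two elements. -/
def IsBrauer {m n : ℕ} (a : Ptn m n) : Prop :=
  ∀ u : Fin m ⊕ Fin n, Nat.card {v // a.r u v} = 2

/-- The clockwise boundary order on the vertices of a diagram. -/
def beta (m n : ℕ) : Fin m ⊕ Fin n → ℕ
  | Sum.inl i => (i : ℕ)
  | Sum.inr j => m + n - 1 - (j : ℕ)

/-- A Temperley–Lieb partition: a planar (non-crossing) Brauer partition. -/
def IsTL {m n : ℕ} (a : Ptn m n) : Prop :=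
  IsBrauer a ∧
    ¬ ∃ u v p q : Fin m ⊕ Fin n, a.r u v ∧ a.r p q ∧
        beta m n u < beta m n p ∧ beta m n p < beta m n v ∧ beta m n v < beta m n q

/-- The domain of a partition: upper vertices lying in transversal blocks. -/
noncomputable def ptnDom {m n : ℕ} (a : Ptn m n) : Finset (Fin m) :=
  Finset.univ.filter fun i => ∃ j : Fin n, a.r (Sum.inl i) (Sum.inr j)

/-- The codomain of a partition: lower vertices lying in transversal blocks. -/
noncomputable def ptnCodom {m n : ℕ} (a : Ptn m n) : Finset (Fin n) :=
  Finset.univ.filter fun j => ∃ i : Fin m, a.r (Sum.inl i) (Sum.inr j)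

/-- The rank of a partition: the number of transversal blocks. -/
noncomputable def ptnRank {m n : ℕ} (a : Ptn m n) : ℕ :=
  Nat.card {C : Quotient a // ∃ (i : Fin m) (j : Fin n),
    Quotient.mk a (Sum.inl i) = C ∧ Quotient.mk a (Sum.inr j) = C}

/-- An even-gap subset of `Fin n`. -/
def IsEvenGap {n : ℕ} (X : Finset (Fin n)) : Prop :=
  X.card ≡ n [MOD 2] ∧
    ∀ (k : ℕ) (h : k < (X.sort (· ≤ ·)).length),
      (((X.sort (· ≤ ·)).get ⟨k, h⟩ : ℕ) + 1) ≡ (k + 1) [MOD 2]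

/-- The reduced (even-gap) matrix of a partition. -/
noncomputable def tlMatrix (K : Type) [Semiring K] {m n : ℕ} (a : Ptn m n) :
    Matrix {X : Finset (Fin m) // IsEvenGap X} {Y : Finset (Fin n) // IsEvenGap Y} K :=
  Matrix.of fun X Y => if IsUnionOfBlocks a X.1 Y.1 then (1 : K) else 0

/-- The standard basis vector `e_X` of `V_n`. -/
def eVec (K : Type) [Semiring K] {n : ℕ} (X : Finset (Fin n)) :
    Finset (Fin n) → K :=
  Pi.single X 1

/-- The subspace `V_n⁺`. -/
def Vplus (K : Type) [Field K] (n : ℕ) : Submodule K (Finset (Fin n) → K) :=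
  Submodule.span K (Set.range fun X : Finset (Fin n) => eVec K X + eVec K Xᶜ)

/-- The subspace `V_n⁻`. -/
def Vminus (K : Type) [Field K] (n : ℕ) : Submodule K (Finset (Fin n) → K) :=
  Submodule.span K (Set.range fun X : Finset (Fin n) => eVec K X - eVec K Xᶜ)


section Aux

variable {m n s t : ℕ}

/-- The generating relation of the tensor sum. -/
def tGen (a : Ptn m n) (b : Ptn s t) :
    ((Fin m ⊕ Fin s) ⊕ (Fin n ⊕ Fin t)) → ((Fin m ⊕ Fin s) ⊕ (Fin n ⊕ Fin t)) → Prop :=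
  fun u v =>
    (∃ p q, tensorProj₁ u = some p ∧ tensorProj₁ v = some q ∧ a.r p q) ∨
    (∃ p q, tensorProj₂ u = some p ∧ tensorProj₂ v = some q ∧ b.r p q)

lemma tGen_equiv (a : Ptn m n) (b : Ptn s t) : Equivalence (tGen a b) := by
  constructor
  · rintro (⟨i | i⟩ | ⟨j | j⟩)
    · exact Or.inl ⟨Sum.inl i, Sum.inl i, rfl, rfl, a.refl _⟩
    · exact Or.inr ⟨Sum.inl i, Sum.inl i, rfl, rfl, b.refl _⟩
    · exact Or.inl ⟨Sum.inr j, Sum.inr j, rfl, rfl, a.refl _⟩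
    · exact Or.inr ⟨Sum.inr j, Sum.inr j, rfl, rfl, b.refl _⟩
  · rintro u v (⟨p, q, h1, h2, h3⟩ | ⟨p, q, h1, h2, h3⟩)
    · exact Or.inl ⟨q, p, h2, h1, a.symm h3⟩
    · exact Or.inr ⟨q, p, h2, h1, b.symm h3⟩
  · rintro u v w (⟨p, q, h1, h2, h3⟩ | ⟨p, q, h1, h2, h3⟩)
      (⟨p', q', h1', h2', h3'⟩ | ⟨p', q', h1', h2', h3'⟩)
    · rw [h2] at h1'
      exact Or.inl ⟨p, q', h1, h2', a.trans h3 (by cases Option.some_injective _ h1'; exact h3')⟩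
    · exfalso; rcases v with (⟨i | i⟩ | ⟨j | j⟩) <;> simp [tensorProj₁, tensorProj₂] at h2 h1'
    · exfalso; rcases v with (⟨i | i⟩ | ⟨j | j⟩) <;> simp [tensorProj₁, tensorProj₂] at h2 h1'
    · rw [h2] at h1'
      exact Or.inr ⟨p, q', h1, h2', b.trans h3 (by cases Option.some_injective _ h1'; exact h3')⟩

lemma ptnTensor_rel (a : Ptn m n) (b : Ptn s t) (u v : Fin (m + s) ⊕ Fin (n + t)) :
    (ptnTensor a b).r u v ↔
      tGen a b (Sum.map finSumFinEquiv.symm finSumFinEquiv.symm u)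
        (Sum.map finSumFinEquiv.symm finSumFinEquiv.symm v) := by
  show Relation.EqvGen _ _ _ ↔ _
  exact (tGen_equiv a b).eqvGen_iff

lemma mem_map_disjSum (X : Finset (Fin m)) (U : Finset (Fin s)) (k : Fin m ⊕ Fin s) :
    finSumFinEquiv k ∈ (X.disjSum U).map finSumFinEquiv.toEmbedding ↔
      (∃ i ∈ X, k = Sum.inl i) ∨ ∃ i ∈ U, k = Sum.inr i := by
  rw [Finset.mem_map]
  constructor
  · rintro ⟨w, hw, he⟩
    have hk : w = k := finSumFinEquiv.injective he
    subst hk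
    rcases w with i | i
    · exact Or.inl ⟨i, (Finset.inl_mem_disjSum).mp hw, rfl⟩
    · exact Or.inr ⟨i, (Finset.inr_mem_disjSum).mp hw, rfl⟩
  · rintro (⟨i, hi, rfl⟩ | ⟨i, hi, rfl⟩)
    · exact ⟨Sum.inl i, Finset.inl_mem_disjSum.mpr hi, rfl⟩
    · exact ⟨Sum.inr i, Finset.inr_mem_disjSum.mpr hi, rfl⟩

lemma union_blocks_tensor (a : Ptn m n) (b : Ptn s t)
    (X : Finset (Fin m)) (Y : Finset (Fin n)) (U : Finset (Fin s)) (V : Finset (Fin t)) :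
    IsUnionOfBlocks (ptnTensor a b)
        ((X.disjSum U).map finSumFinEquiv.toEmbedding)
        ((Y.disjSum V).map finSumFinEquiv.toEmbedding) ↔
      IsUnionOfBlocks a X Y ∧ IsUnionOfBlocks b U V := by
  set P := (X.disjSum U).map finSumFinEquiv.toEmbedding
  set Q := (Y.disjSum V).map finSumFinEquiv.toEmbedding
  have memP : ∀ k : Fin m ⊕ Fin s, finSumFinEquiv k ∈ P ↔
      (∃ i ∈ X, k = Sum.inl i) ∨ ∃ i ∈ U, k = Sum.inr i := mem_map_disjSum X U
  have memQ : ∀ k : Fin n ⊕ Fin t, finSumFinEquiv k ∈ Q ↔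
      (∃ i ∈ Y, k = Sum.inl i) ∨ ∃ i ∈ V, k = Sum.inr i := mem_map_disjSum Y V
  -- membership in the big set, via the back map
  have memBig : ∀ w : (Fin m ⊕ Fin s) ⊕ (Fin n ⊕ Fin t),
      (Sum.map finSumFinEquiv finSumFinEquiv w ∈
        Sum.inl '' (P : Set (Fin (m + s))) ∪ Sum.inr '' (Q : Set (Fin (n + t)))) ↔
      (match w with
        | Sum.inl (Sum.inl i) => i ∈ X
        | Sum.inl (Sum.inr i) => i ∈ U
        | Sum.inr (Sum.inl j) => j ∈ Y
        | Sum.inr (Sum.inr j) => j ∈ V) := by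
    rintro ((i | i) | (j | j)) <;>
      simp only [Sum.map_inl, Sum.map_inr, Set.mem_union, Set.mem_image,
        Finset.mem_coe, Sum.inl.injEq, Sum.inr.injEq, exists_eq_right,
        reduceCtorEq, exists_false, or_false, false_or]
    · rw [memP (Sum.inl i)]; simp
    · rw [memP (Sum.inr i)]; simp
    · rw [memQ (Sum.inl j)]; simp
    · rw [memQ (Sum.inr j)]; simp
  constructor
  · intro h
    constructor
    · intro u v huv
      have key := h (Sum.map finSumFinEquiv finSumFinEquiv (Sum.map Sum.inl Sum.inl
          (u : Fin m ⊕ Fin n) : (Fin m ⊕ Fin s) ⊕ (Fin n ⊕ Fin t)))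
        (Sum.map finSumFinEquiv finSumFinEquiv (Sum.map Sum.inl Sum.inl v))
        (by
          rw [ptnTensor_rel]
          have : ∀ w : Fin m ⊕ Fin n,
              Sum.map (⇑finSumFinEquiv.symm) (⇑finSumFinEquiv.symm)
                (Sum.map (⇑finSumFinEquiv) (⇑finSumFinEquiv)
                  (Sum.map Sum.inl Sum.inl w : (Fin m ⊕ Fin s) ⊕ (Fin n ⊕ Fin t)))
              = Sum.map Sum.inl Sum.inl w := by
            rintro (i | j) <;> simp
          rw [this u, this v]
          rcases u with i | j <;> rcases v with i' | j'
          · exact Or.inl ⟨Sum.inl i, Sum.inl i', rfl, rfl, huv⟩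
          · exact Or.inl ⟨Sum.inl i, Sum.inr j', rfl, rfl, huv⟩
          · exact Or.inl ⟨Sum.inr j, Sum.inl i', rfl, rfl, huv⟩
          · exact Or.inl ⟨Sum.inr j, Sum.inr j', rfl, rfl, huv⟩)
      rw [memBig, memBig] at key
      rcases u with i | j <;> rcases v with i' | j' <;>
        simpa using key
    · intro u v huv
      have key := h (Sum.map finSumFinEquiv finSumFinEquiv (Sum.map Sum.inr Sum.inr
          (u : Fin s ⊕ Fin t) : (Fin m ⊕ Fin s) ⊕ (Fin n ⊕ Fin t)))
        (Sum.map finSumFinEquiv finSumFinEquiv (Sum.map Sum.inr Sum.inr v))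
        (by
          rw [ptnTensor_rel]
          have : ∀ w : Fin s ⊕ Fin t,
              Sum.map (⇑finSumFinEquiv.symm) (⇑finSumFinEquiv.symm)
                (Sum.map (⇑finSumFinEquiv) (⇑finSumFinEquiv)
                  (Sum.map Sum.inr Sum.inr w : (Fin m ⊕ Fin s) ⊕ (Fin n ⊕ Fin t)))
              = Sum.map Sum.inr Sum.inr w := by
            rintro (i | j) <;> simp
          rw [this u, this v]
          rcases u with i | j <;> rcases v with i' | j'
          · exact Or.inr ⟨Sum.inl i, Sum.inl i', rfl, rfl, huv⟩
          · exact Or.inr ⟨Sum.inl i, Sum.inr j', rfl, rfl, huv⟩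
          · exact Or.inr ⟨Sum.inr j, Sum.inl i', rfl, rfl, huv⟩
          · exact Or.inr ⟨Sum.inr j, Sum.inr j', rfl, rfl, huv⟩)
      rw [memBig, memBig] at key
      rcases u with i | j <;> rcases v with i' | j' <;>
        simpa using key
  · rintro ⟨ha, hb⟩ u v huv
    rw [ptnTensor_rel] at huv
    have hu : u = Sum.map finSumFinEquiv finSumFinEquiv
        (Sum.map finSumFinEquiv.symm finSumFinEquiv.symm u) := by
      rcases u with k | k <;> simp
    have hv : v = Sum.map finSumFinEquiv finSumFinEquiv
        (Sum.map finSumFinEquiv.symm finSumFinEquiv.symm v) := by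
      rcases v with k | k <;> simp
    rw [hu, hv, memBig, memBig]
    set w := Sum.map finSumFinEquiv.symm finSumFinEquiv.symm u with hw
    set w' := Sum.map finSumFinEquiv.symm finSumFinEquiv.symm v with hw'
    clear_value w w'
    rcases huv with ⟨p, q, h1, h2, h3⟩ | ⟨p, q, h1, h2, h3⟩
    · have hap := ha p q h3
      rcases w with (i | i) | (j | j) <;> rcases w' with (i' | i') | (j' | j') <;>
        simp only [tensorProj₁, Option.some.injEq, reduceCtorEq] at h1 h2 <;>
        first
          | exact absurd h1 (by simp)
          | exact absurd h2 (by simp)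
          | (subst h1; subst h2; simpa using hap)
    · have hbp := hb p q h3
      rcases w with (i | i) | (j | j) <;> rcases w' with (i' | i') | (j' | j') <;>
        simp only [tensorProj₂, Option.some.injEq, reduceCtorEq] at h1 h2 <;>
        first
          | exact absurd h1 (by simp)
          | exact absurd h2 (by simp)
          | (subst h1; subst h2; simpa using hbp)

lemma union_blocks_star (a : Ptn m n) (X : Finset (Fin m)) (Y : Finset (Fin n)) :
    IsUnionOfBlocks (ptnStar a) Y X ↔ IsUnionOfBlocks a X Y := by
  have mem : ∀ u : Fin n ⊕ Fin m,
      (u ∈ Sum.inl '' (Y : Set (Fin n)) ∪ Sum.inr '' (X : Set (Fin m))) ↔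
      (Sum.swap u ∈ Sum.inl '' (X : Set (Fin m)) ∪ Sum.inr '' (Y : Set (Fin n))) := by
    rintro (j | i) <;> simp [Sum.swap]
  constructor
  · intro h u v huv
    have := h (Sum.swap u) (Sum.swap v) (by
      show a.r (Sum.swap (Sum.swap u)) (Sum.swap (Sum.swap v))
      simpa using huv)
    rw [mem, mem] at this
    simpa using this
  · intro h u v huv
    rw [mem, mem]
    exact h _ _ huv

end Aux

/-- `a ↦ ā` preserves the involution (as transposition) and sends tensor
sums of partitions to Kronecker products of matrices. -/
theorem ptn_matrix_star_tensor (K : Type) [Semiring K] :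
    (∀ (m n : ℕ) (a : Ptn m n) (X : Finset (Fin m)) (Y : Finset (Fin n)),
      ptnMatrix K (ptnStar a) Y X = ptnMatrix K a X Y) ∧
    (∀ (m n s t : ℕ) (a : Ptn m n) (b : Ptn s t)
      (X : Finset (Fin m)) (Y : Finset (Fin n)) (U : Finset (Fin s)) (V : Finset (Fin t)),
      ptnMatrix K (ptnTensor a b)
          ((X.disjSum U).map finSumFinEquiv.toEmbedding)
          ((Y.disjSum V).map finSumFinEquiv.toEmbedding)
        = ptnMatrix K a X Y * ptnMatrix K b U V) := by
  constructor
  · intro m n a X Y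
    simp only [ptnMatrix, Matrix.of_apply, union_blocks_star]
  · intro m n s t a b X Y U V
    simp only [ptnMatrix, Matrix.of_apply, union_blocks_tensor, Matrix.of_apply]
    by_cases h1 : IsUnionOfBlocks a X Y <;> by_cases h2 : IsUnionOfBlocks b U V <;>
      simp [h1, h2]
end

section
/- Let a ∈ P_{m,n}, X a Finset of Fin m and Y a Finset of Fin n. The following are equivalent: (1) (X,Y) is a union of a-blocks; (2) X is a union of ker(a)-classes, and there exists a Finset P of Fin n with Y = Xa ∪ P such that (∅, P) is a union of a-blocks; (3) Y is a union of coker(a)-classes, and there exists a Finset Q of Fin m with X = aY ∪ Q such that (Q, ∅) is a union of a-blocks. -/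
open Classical

section AuxUnion

variable {m n : ℕ}

lemma memS_inl (X : Finset (Fin m)) (Y : Finset (Fin n)) (x : Fin m) :
    Sum.inl x ∈ Sum.inl '' (X : Set (Fin m)) ∪ Sum.inr '' (Y : Set (Fin n)) ↔ x ∈ X := by
  simp

lemma memS_inr (X : Finset (Fin m)) (Y : Finset (Fin n)) (y : Fin n) :
    Sum.inr y ∈ Sum.inl '' (X : Set (Fin m)) ∪ Sum.inr '' (Y : Set (Fin n)) ↔ y ∈ Y := by
  simp

lemma isUnion_of_mp (a : Ptn m n) (X : Finset (Fin m)) (Y : Finset (Fin n))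
    (h : ∀ u v, a.r u v →
      u ∈ Sum.inl '' (X : Set (Fin m)) ∪ Sum.inr '' (Y : Set (Fin n)) →
      v ∈ Sum.inl '' (X : Set (Fin m)) ∪ Sum.inr '' (Y : Set (Fin n))) :
    IsUnionOfBlocks a X Y :=
  fun u v hr => ⟨h u v hr, h v u (a.symm hr)⟩

lemma mem_ptnImage {a : Ptn m n} {X : Finset (Fin m)} {j : Fin n} :
    j ∈ ptnImage a X ↔ ∃ x ∈ X, a.r (Sum.inl x) (Sum.inr j) := by
  simp [ptnImage]

lemma mem_ptnPreimage {a : Ptn m n} {Y : Finset (Fin n)} {i : Fin m} :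
    i ∈ ptnPreimage a Y ↔ ∃ y ∈ Y, a.r (Sum.inl i) (Sum.inr y) := by
  simp [ptnPreimage]

lemma lemA (a : Ptn m n) (X : Finset (Fin m)) (Y : Finset (Fin n)) :
    IsUnionOfBlocks a X Y ↔
      (KerClosed a X ∧ ∃ P : Finset (Fin n),
        Y = ptnImage a X ∪ P ∧ IsUnionOfBlocks a ∅ P) := by
  constructor
  · intro h
    have hXa : ptnImage a X ⊆ Y := by
      intro j hj
      obtain ⟨x, hx, hrel⟩ := mem_ptnImage.mp hj
      exact (memS_inr X Y j).mp ((h _ _ hrel).mp ((memS_inl X Y x).mpr hx))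
    refine ⟨?_, Y \ ptnImage a X, ?_, ?_⟩
    · intro x hx i hrel
      exact (memS_inl X Y i).mp ((h _ _ hrel).mp ((memS_inl X Y x).mpr hx))
    · exact (Finset.union_sdiff_of_subset hXa).symm
    · refine isUnion_of_mp a ∅ _ ?_
      intro u v hrel hu
      rcases hu with hu | hu
      · simp at hu
      · obtain ⟨j, hj, rfl⟩ := hu
        rw [Finset.coe_sdiff, Set.mem_diff] at hj
        obtain ⟨hjY, hjXa⟩ := hj
        have hv : v ∈ Sum.inl '' (X : Set (Fin m)) ∪ Sum.inr '' (Y : Set (Fin n)) :=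
          (h _ _ hrel).mp ((memS_inr X Y j).mpr hjY)
        rcases v with i | k
        · exfalso
          have hiX : i ∈ X := (memS_inl X Y i).mp hv
          exact hjXa (mem_ptnImage.mpr ⟨i, hiX, a.symm hrel⟩)
        · have hkY : k ∈ Y := (memS_inr X Y k).mp hv
          have hkXa : k ∉ ptnImage a X := by
            intro hk
            obtain ⟨x, hx, hrel'⟩ := mem_ptnImage.mp hk
            exact hjXa (mem_ptnImage.mpr ⟨x, hx, a.trans hrel' (a.symm hrel)⟩)
          right
          exact ⟨k, by simp [hkY, hkXa], rfl⟩
  · rintro ⟨hker, P, rfl, hP⟩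
    refine isUnion_of_mp a _ _ ?_
    intro u v hrel hu
    rcases hu with hu | hu
    · obtain ⟨x, hx, rfl⟩ := hu
      rcases v with i | k
      · exact Or.inl ⟨i, hker x hx i hrel, rfl⟩
      · exact Or.inr ⟨k, by
          simpa using Or.inl (mem_ptnImage.mpr ⟨x, hx, hrel⟩), rfl⟩
    · obtain ⟨j, hj, rfl⟩ := hu
      simp only [Finset.coe_union, Set.mem_union, Finset.mem_coe] at hj
      rcases hj with hj | hj
      · obtain ⟨x, hx, hrel'⟩ := mem_ptnImage.mp hj
        have hxv : a.r (Sum.inl x) v := a.trans hrel' hrel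
        rcases v with i | k
        · exact Or.inl ⟨i, hker x hx i hxv, rfl⟩
        · exact Or.inr ⟨k, by
            simpa using Or.inl (mem_ptnImage.mpr ⟨x, hx, hxv⟩), rfl⟩
      · have hv := (hP _ _ hrel).mp (Or.inr ⟨j, hj, rfl⟩)
        rcases hv with hv | hv
        · simp at hv
        · obtain ⟨k, hk, rfl⟩ := hv
          exact Or.inr ⟨k, by simp [Finset.mem_coe.mp hk], rfl⟩

lemma lemB (a : Ptn m n) (X : Finset (Fin m)) (Y : Finset (Fin n)) :
    IsUnionOfBlocks a X Y ↔
      (CokerClosed a Y ∧ ∃ Q : Finset (Fin m),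
        X = ptnPreimage a Y ∪ Q ∧ IsUnionOfBlocks a Q ∅) := by
  constructor
  · intro h
    have haY : ptnPreimage a Y ⊆ X := by
      intro i hi
      obtain ⟨y, hy, hrel⟩ := mem_ptnPreimage.mp hi
      exact (memS_inl X Y i).mp ((h _ _ hrel).mpr ((memS_inr X Y y).mpr hy))
    refine ⟨?_, X \ ptnPreimage a Y, ?_, ?_⟩
    · intro y hy j hrel
      exact (memS_inr X Y j).mp ((h _ _ hrel).mp ((memS_inr X Y y).mpr hy))
    · exact (Finset.union_sdiff_of_subset haY).symm
    · refine isUnion_of_mp a _ ∅ ?_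
      intro u v hrel hu
      rcases hu with hu | hu
      · obtain ⟨i, hi, rfl⟩ := hu
        rw [Finset.coe_sdiff, Set.mem_diff] at hi
        obtain ⟨hiX, hiaY⟩ := hi
        have hv : v ∈ Sum.inl '' (X : Set (Fin m)) ∪ Sum.inr '' (Y : Set (Fin n)) :=
          (h _ _ hrel).mp ((memS_inl X Y i).mpr hiX)
        rcases v with i' | j
        · have hi'X : i' ∈ X := (memS_inl X Y i').mp hv
          have hi'aY : i' ∉ ptnPreimage a Y := by
            intro hk
            obtain ⟨y, hy, hrel'⟩ := mem_ptnPreimage.mp hk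
            exact hiaY (mem_ptnPreimage.mpr ⟨y, hy, a.trans hrel hrel'⟩)
          exact Or.inl ⟨i', by simp [hi'X, hi'aY], rfl⟩
        · exfalso
          have hjY : j ∈ Y := (memS_inr X Y j).mp hv
          exact hiaY (mem_ptnPreimage.mpr ⟨j, hjY, hrel⟩)
      · simp at hu
  · rintro ⟨hcoker, Q, rfl, hQ⟩
    refine isUnion_of_mp a _ _ ?_
    intro u v hrel hu
    rcases hu with hu | hu
    · obtain ⟨i, hi, rfl⟩ := hu
      simp only [Finset.coe_union, Set.mem_union, Finset.mem_coe] at hi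
      rcases hi with hi | hi
      · obtain ⟨y, hy, hrel'⟩ := mem_ptnPreimage.mp hi
        have hyv : a.r (Sum.inr y) v := a.trans (a.symm hrel') hrel
        rcases v with i' | j
        · exact Or.inl ⟨i', by
            simpa using Or.inl (mem_ptnPreimage.mpr ⟨y, hy, a.symm hyv⟩), rfl⟩
        · exact Or.inr ⟨j, hcoker y hy j hyv, rfl⟩
      · have hv := (hQ _ _ hrel).mp (Or.inl ⟨i, hi, rfl⟩)
        rcases hv with hv | hv
        · obtain ⟨i', hi', rfl⟩ := hv
          exact Or.inl ⟨i', by simp [Finset.mem_coe.mp hi'], rfl⟩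
        · simp at hv
    · obtain ⟨y, hy, rfl⟩ := hu
      rcases v with i | j
      · exact Or.inl ⟨i, by
          simpa using Or.inl (mem_ptnPreimage.mpr ⟨y, hy, a.symm hrel⟩), rfl⟩
      · exact Or.inr ⟨j, hcoker y hy j hrel, rfl⟩

end AuxUnion

/-- characterisations of when `(X,Y)` is a union of `a`-blocks. -/
theorem isUnionOfBlocks_iff {m n : ℕ} (a : Ptn m n)
    (X : Finset (Fin m)) (Y : Finset (Fin n)) :
    (IsUnionOfBlocks a X Y ↔
      (KerClosed a X ∧ ∃ P : Finset (Fin n),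
        Y = ptnImage a X ∪ P ∧ IsUnionOfBlocks a ∅ P)) ∧
    (IsUnionOfBlocks a X Y ↔
      (CokerClosed a Y ∧ ∃ Q : Finset (Fin m),
        X = ptnPreimage a Y ∪ Q ∧ IsUnionOfBlocks a Q ∅)) :=
  ⟨lemA a X Y, lemB a X Y⟩
end

section
/- Let K be a semiring and let n ≥ 1. If \overline{ab} = ā ⬝ b̄ holds for all a, b ∈ P_{n,n} (i.e. the map a ↦ ā is multiplicative on the partition monoid of degree n over K), then 1 + 1 = 1 in K. -/
open Classical

/-- if `a ↦ ā` is multiplicative on some partition monoid `P_{n,n}` with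
`n ≥ 1`, then the semiring is additively idempotent. -/
theorem idem_of_ptn_matrix_mul (K : Type) [Semiring K] (n : ℕ) (hn : 1 ≤ n)
    (h : ∀ a b : Ptn n n, ptnMatrix K (ptnMul a b) = ptnMatrix K a * ptnMatrix K b) :
    (1 : K) + 1 = 1 := by
  haveI : NeZero n := ⟨by omega⟩
  set s : Ptn n n := Setoid.ker Sum.isLeft with hs
  have hrel : ∀ u v : Fin n ⊕ Fin n, s.r u v ↔ u.isLeft = v.isLeft := fun u v => Iff.rfl
  have hIU1 : ∀ Z : Finset (Fin n),
      IsUnionOfBlocks s (∅ : Finset (Fin n)) Z ↔ (Z = ∅ ∨ Z = Finset.univ) := by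
    intro Z
    constructor
    · intro hZ
      by_contra hc
      push_neg at hc
      obtain ⟨z, hz⟩ := hc.1
      obtain ⟨w, hw⟩ : ∃ w, w ∉ Z := by
        by_contra hall; push_neg at hall
        exact hc.2 (Finset.eq_univ_iff_forall.2 hall)
      have := hZ (Sum.inr z) (Sum.inr w) rfl
      simp at this
      exact hw (this.1 hz)
    · rintro (rfl | rfl) u v huv
      · simp
      · rcases u with a | a <;> rcases v with b | b <;> simp_all [hrel]
  have hIU2 : ∀ Z : Finset (Fin n),
      IsUnionOfBlocks s Z (∅ : Finset (Fin n)) ↔ (Z = ∅ ∨ Z = Finset.univ) := by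
    intro Z
    constructor
    · intro hZ
      by_contra hc
      push_neg at hc
      obtain ⟨z, hz⟩ := hc.1
      obtain ⟨w, hw⟩ : ∃ w, w ∉ Z := by
        by_contra hall; push_neg at hall
        exact hc.2 (Finset.eq_univ_iff_forall.2 hall)
      have := hZ (Sum.inl z) (Sum.inl w) rfl
      simp at this
      exact hw (this.1 hz)
    · rintro (rfl | rfl) u v huv
      · simp
      · rcases u with a | a <;> rcases v with b | b <;> simp_all [hrel]
  have key := congrFun (congrFun (h s s) ∅) ∅
  rw [Matrix.mul_apply] at key
  have hL : ptnMatrix K (ptnMul s s) (∅ : Finset (Fin n)) ∅ = 1 := by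
    have : IsUnionOfBlocks (ptnMul s s) (∅ : Finset (Fin n)) ∅ := by
      intro u v _; simp
    simp [ptnMatrix, this]
  rw [hL] at key
  have hterm : ∀ Z : Finset (Fin n), ptnMatrix K s ∅ Z * ptnMatrix K s Z ∅ =
      if Z ∈ ({∅, Finset.univ} : Finset (Finset (Fin n))) then 1 else 0 := by
    intro Z
    simp only [ptnMatrix, Matrix.of_apply, Finset.mem_insert, Finset.mem_singleton]
    by_cases hZ : Z = ∅ ∨ Z = Finset.univ
    · rw [if_pos ((hIU1 Z).2 hZ), if_pos ((hIU2 Z).2 hZ), if_pos hZ, one_mul]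
    · rw [if_neg (fun hh => hZ ((hIU1 Z).1 hh)), if_neg hZ, zero_mul]
  rw [Finset.sum_congr rfl (fun Z _ => hterm Z)] at key
  rw [Finset.sum_ite_mem, Finset.univ_inter, Finset.sum_pair
    (Finset.univ_nonempty.ne_empty.symm : (∅ : Finset (Fin n)) ≠ Finset.univ)] at key
  exact key.symm
end

section
/- Let K be any semiring. For all a ∈ P_{m,n} and b ∈ P_{n,t}, the matrix product satisfies ā ⬝ b̄ = ((2^{Φ(a,b)} : ℕ) : K) • \overline{ab}; entrywise, for all Finsets X of Fin m and Y of Fin t, (ā ⬝ b̄)_{X,Y} equals the natural number 2^{Φ(a,b)} cast into K if (X,Y) is a union of ab-blocks, and equals 0 otherwise. -/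
open Classical

namespace PtnAux

/-- Membership predicate for a pair of finsets on a sum type. -/
def memOf {α β : Type} (X : Finset α) (Y : Finset β) : α ⊕ β → Prop
  | Sum.inl i => i ∈ X
  | Sum.inr j => j ∈ Y

lemma mem_union_iff {α β : Type} (X : Finset α) (Y : Finset β) (u : α ⊕ β) :
    u ∈ Sum.inl '' (X : Set α) ∪ Sum.inr '' (Y : Set β) ↔ memOf X Y u := by
  cases u <;> simp [memOf]

lemma isUnion_iff {m n : ℕ} (a : Ptn m n) (X : Finset (Fin m)) (Y : Finset (Fin n)) :
    IsUnionOfBlocks a X Y ↔ ∀ u v, a.r u v → (memOf X Y u ↔ memOf X Y v) := by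
  unfold IsUnionOfBlocks
  refine forall_congr' fun u => forall_congr' fun v => imp_congr_right fun _ => ?_
  rw [mem_union_iff, mem_union_iff]

section

variable {m n t : ℕ}

/-- `T(X,Z,Y)` as a predicate on `Fin m ⊕ Fin n ⊕ Fin t`. -/
def Tset (X : Finset (Fin m)) (Z : Finset (Fin n)) (Y : Finset (Fin t)) :
    Fin m ⊕ Fin n ⊕ Fin t → Prop
  | Sum.inl i => i ∈ X
  | Sum.inr (Sum.inl j) => j ∈ Z
  | Sum.inr (Sum.inr k) => k ∈ Y

variable (X : Finset (Fin m)) (Z : Finset (Fin n)) (Y : Finset (Fin t))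

lemma tset_map (p : Fin m ⊕ Fin t) :
    Tset X Z Y (Sum.map id Sum.inr p) ↔ memOf X Y p := by
  cases p <;> exact Iff.rfl

lemma exists_map (u : Fin m ⊕ Fin n ⊕ Fin t) (h : ∀ j : Fin n, u ≠ Sum.inr (Sum.inl j)) :
    ∃ p : Fin m ⊕ Fin t, u = Sum.map id Sum.inr p := by
  rcases u with i | j | k
  exacts [⟨Sum.inl i, rfl⟩, absurd rfl (h j), ⟨Sum.inr k, rfl⟩]

lemma not_mid_of_inB {u : Fin m ⊕ Fin n ⊕ Fin t} (h : Tset X ∅ Y u) :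
    ∀ j : Fin n, u ≠ Sum.inr (Sum.inl j) := by
  rintro j rfl
  simpa [Tset] using h

variable (a : Ptn m n) (b : Ptn n t)

lemma prodSetoid_rel (u v : Fin m ⊕ Fin n ⊕ Fin t) :
    (prodSetoid a b).r u v ↔ Relation.EqvGen (prodGen a b) u v := Iff.rfl

lemma ptnMul_rel (p q : Fin m ⊕ Fin t) :
    (ptnMul a b).r p q ↔
      (prodSetoid a b).r (Sum.map id Sum.inr p) (Sum.map id Sum.inr q) := Iff.rfl

lemma intertwining_iff_sat :
    Intertwining a b X Y Z ↔
      ∀ u v, (prodSetoid a b).r u v → (Tset X Z Y u ↔ Tset X Z Y v) := by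
  constructor
  · rintro ⟨h1, h2⟩ u v huv
    rw [isUnion_iff] at h1 h2
    rw [prodSetoid_rel] at huv
    induction huv with
    | rel u v h =>
      rcases h with ⟨p, q, hpq, rfl, rfl⟩ | ⟨p, q, hpq, rfl, rfl⟩
      · have := h1 p q hpq
        cases p <;> cases q <;> simpa [Tset, memOf] using this
      · have := h2 p q hpq
        cases p <;> cases q <;> simpa [Tset, memOf] using this
    | refl u => exact Iff.rfl
    | symm _ _ _ ih => exact ih.symm
    | trans _ _ _ _ _ ih1 ih2 => exact ih1.trans ih2
  · intro h
    constructor <;> rw [isUnion_iff] <;> intro p q hpq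
    · have := h (Sum.map id Sum.inl p) (Sum.map id Sum.inl q)
        (Relation.EqvGen.rel _ _ (Or.inl ⟨p, q, hpq, rfl, rfl⟩))
      cases p <;> cases q <;> simpa [Tset, memOf] using this
    · have := h (Sum.inr p) (Sum.inr q)
        (Relation.EqvGen.rel _ _ (Or.inr ⟨p, q, hpq, rfl, rfl⟩))
      cases p <;> cases q <;> simpa [Tset, memOf] using this

lemma good_iff :
    IsUnionOfBlocks (ptnMul a b) X Y ↔
      ∀ p q : Fin m ⊕ Fin t,
        (prodSetoid a b).r (Sum.map id Sum.inr p) (Sum.map id Sum.inr q) →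
        (memOf X Y p ↔ memOf X Y q) :=
  isUnion_iff (ptnMul a b) X Y

/-- The middle-class predicate, matching the definition of `Phi`. -/
def MidC (C : Quotient (prodSetoid a b)) : Prop :=
  ∀ u, Quotient.mk (prodSetoid a b) u = C → ∃ j : Fin n, u = Sum.inr (Sum.inl j)

/-- A class touches the boundary set `B`. -/
def Touches (C : Quotient (prodSetoid a b)) : Prop :=
  ∃ u, Quotient.mk (prodSetoid a b) u = C ∧ Tset X ∅ Y u

lemma phi_eq : Phi a b = Nat.card {C // MidC a b C} := rfl

lemma not_touches_of_mid {C : Quotient (prodSetoid a b)} (h : MidC a b C) :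
    ¬ Touches X Y a b C := by
  rintro ⟨u, hu, hB⟩
  obtain ⟨j, rfl⟩ := h u hu
  simpa [Tset] using hB

open Classical in
/-- The intertwining set associated to a finset of middle classes. -/
noncomputable def fset (S : Finset {C // MidC a b C}) : Finset (Fin n) :=
  Finset.univ.filter fun j =>
    Touches X Y a b (Quotient.mk (prodSetoid a b) (Sum.inr (Sum.inl j))) ∨
    ∃ h : MidC a b (Quotient.mk (prodSetoid a b) (Sum.inr (Sum.inl j))),
      (⟨_, h⟩ : {C // MidC a b C}) ∈ S

lemma mem_fset (S : Finset {C // MidC a b C}) (j : Fin n) :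
    j ∈ fset X Y a b S ↔
      Touches X Y a b (Quotient.mk (prodSetoid a b) (Sum.inr (Sum.inl j))) ∨
      ∃ h : MidC a b (Quotient.mk (prodSetoid a b) (Sum.inr (Sum.inl j))),
        (⟨_, h⟩ : {C // MidC a b C}) ∈ S := by
  simp [fset]

variable {a b X Y}

lemma good_tset (good : IsUnionOfBlocks (ptnMul a b) X Y)
    {u v : Fin m ⊕ Fin n ⊕ Fin t} (h : (prodSetoid a b).r u v)
    (hu : ∀ j : Fin n, u ≠ Sum.inr (Sum.inl j))
    (hv : ∀ j : Fin n, v ≠ Sum.inr (Sum.inl j)) (Z Z' : Finset (Fin n)) :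
    Tset X Z Y u ↔ Tset X Z' Y v := by
  obtain ⟨p, rfl⟩ := exists_map u hu
  obtain ⟨q, rfl⟩ := exists_map v hv
  rw [tset_map, tset_map]
  exact (good_iff X Y a b).mp good p q h

lemma tset_bdry_indep {v : Fin m ⊕ Fin n ⊕ Fin t}
    (hv : ∀ j : Fin n, v ≠ Sum.inr (Sum.inl j)) (Z Z' : Finset (Fin n)) :
    Tset X Z Y v ↔ Tset X Z' Y v := by
  obtain ⟨q, rfl⟩ := exists_map v hv
  rw [tset_map, tset_map]

lemma intertwining_fset (good : IsUnionOfBlocks (ptnMul a b) X Y)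
    (S : Finset {C // MidC a b C}) :
    Intertwining a b X Y (fset X Y a b S) := by
  rw [intertwining_iff_sat]
  have key : ∀ u v, (prodSetoid a b).r u v →
      Tset X (fset X Y a b S) Y u → Tset X (fset X Y a b S) Y v := by
    intro u v h hu
    by_cases hum : ∀ j : Fin n, u ≠ Sum.inr (Sum.inl j)
    · by_cases hvm : ∀ j : Fin n, v ≠ Sum.inr (Sum.inl j)
      · exact (good_tset good h hum hvm (fset X Y a b S) (fset X Y a b S)).mp hu
      · -- v is middle
        push_neg at hvm
        obtain ⟨j, rfl⟩ := hvm
        have hInB : Tset X ∅ Y u := (tset_bdry_indep hum _ ∅).mp hu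
        have : Touches X Y a b (Quotient.mk (prodSetoid a b) (Sum.inr (Sum.inl j))) :=
          ⟨u, Quotient.sound h, hInB⟩
        show j ∈ fset X Y a b S
        exact (mem_fset X Y a b S j).mpr (Or.inl this)
    · push_neg at hum
      obtain ⟨j, rfl⟩ := hum
      have hj : j ∈ fset X Y a b S := hu
      rw [mem_fset] at hj
      by_cases hvm : ∀ j' : Fin n, v ≠ Sum.inr (Sum.inl j')
      · -- v is boundary
        rcases hj with ht | ⟨hmid, _⟩
        · obtain ⟨w, hw, hwB⟩ := ht
          have hwv : (prodSetoid a b).r w v :=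
            (prodSetoid a b).trans' (Quotient.exact hw) h
          have hwm := not_mid_of_inB X Y hwB
          have := (good_tset good hwv hwm hvm ∅ (fset X Y a b S)).mp hwB
          exact this
        · obtain ⟨j', hj'⟩ := hmid v (Quotient.sound h).symm
          exact absurd hj' (hvm j')
      · push_neg at hvm
        obtain ⟨j', rfl⟩ := hvm
        have hq : Quotient.mk (prodSetoid a b) (Sum.inr (Sum.inl j))
            = Quotient.mk (prodSetoid a b) (Sum.inr (Sum.inl j' : Fin n ⊕ Fin t)) :=
          Quotient.sound h
        show j' ∈ fset X Y a b S
        rw [mem_fset]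
        rw [hq] at hj
        exact hj
  exact fun u v h => ⟨key u v h, key v u ((prodSetoid a b).symm' h)⟩

lemma good_of_intertwining {Z : Finset (Fin n)} (h : Intertwining a b X Y Z) :
    IsUnionOfBlocks (ptnMul a b) X Y := by
  rw [intertwining_iff_sat] at h
  rw [good_iff]
  intro p q hpq
  have := h _ _ hpq
  rwa [tset_map, tset_map] at this

open Classical in
/-- The finset of middle classes associated to an intertwining set. -/
noncomputable def gset (Z : Finset (Fin n)) : Finset {C // MidC a b C} :=
  Finset.univ.filter fun C =>
    ∃ j : Fin n, Quotient.mk (prodSetoid a b) (Sum.inr (Sum.inl j)) = C.1 ∧ j ∈ Z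

lemma gset_fset (S : Finset {C // MidC a b C}) : gset (fset X Y a b S) = S := by
  ext C
  obtain ⟨q, hmid⟩ := C
  simp only [gset, Finset.mem_filter, Finset.mem_univ, true_and]
  constructor
  · rintro ⟨j, hj, hjf⟩
    rw [mem_fset] at hjf
    rcases hjf with ht | ⟨h, hS⟩
    · rw [hj] at ht
      exact absurd ht (not_touches_of_mid X Y a b hmid)
    · have he : (⟨_, h⟩ : {C // MidC a b C}) = ⟨q, hmid⟩ := Subtype.ext hj
      rwa [he] at hS
  · intro hS
    obtain ⟨j, hj⟩ := hmid q.out q.out_eq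
    have hq : Quotient.mk (prodSetoid a b) (Sum.inr (Sum.inl j)) = q := by
      rw [← hj]; exact q.out_eq
    refine ⟨j, hq, ?_⟩
    rw [mem_fset]
    right
    have hmid' : MidC a b (Quotient.mk (prodSetoid a b) (Sum.inr (Sum.inl j))) := by
      rw [hq]; exact hmid
    refine ⟨hmid', ?_⟩
    have he : (⟨_, hmid'⟩ : {C // MidC a b C}) = ⟨q, hmid⟩ := Subtype.ext hq
    rw [he]
    exact hS

lemma fset_gset {Z : Finset (Fin n)} (h : Intertwining a b X Y Z) :
    fset X Y a b (gset Z) = Z := by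
  have sat := (intertwining_iff_sat X Z Y a b).mp h
  ext j
  rw [mem_fset]
  constructor
  · rintro (⟨u, hu, huB⟩ | ⟨hmid, hS⟩)
    · have hrel : (prodSetoid a b).r u (Sum.inr (Sum.inl j)) := Quotient.exact hu
      have hum := not_mid_of_inB X Y huB
      have : Tset X Z Y u := (tset_bdry_indep hum ∅ Z).mp huB
      exact (sat _ _ hrel).mp this
    · simp only [gset, Finset.mem_filter, Finset.mem_univ, true_and] at hS
      obtain ⟨j', hj', hj'Z⟩ := hS
      have hrel : (prodSetoid a b).r (Sum.inr (Sum.inl j')) (Sum.inr (Sum.inl j)) :=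
        Quotient.exact hj'
      exact (sat _ _ hrel).mp hj'Z
  · intro hjZ
    by_cases hmid : MidC a b (Quotient.mk (prodSetoid a b) (Sum.inr (Sum.inl j)))
    · right
      refine ⟨hmid, ?_⟩
      simp only [gset, Finset.mem_filter, Finset.mem_univ, true_and]
      exact ⟨j, rfl, hjZ⟩
    · left
      simp only [MidC, not_forall] at hmid
      obtain ⟨u, hu, hum⟩ := hmid
      push_neg at hum
      have hum' : ∀ j' : Fin n, u ≠ Sum.inr (Sum.inl j') := fun j' he => hum j' he
      have hrel : (prodSetoid a b).r u (Sum.inr (Sum.inl j)) := Quotient.exact hu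
      have : Tset X Z Y u := (sat _ _ hrel).mpr hjZ
      exact ⟨u, hu, (tset_bdry_indep hum' Z ∅).mp this⟩

open Classical in
lemma card_intertwining (good : IsUnionOfBlocks (ptnMul a b) X Y) :
    (Finset.univ.filter fun Z : Finset (Fin n) => Intertwining a b X Y Z).card
      = 2 ^ Phi a b := by
  classical
  have hbij : (Finset.univ.filter fun Z : Finset (Fin n) => Intertwining a b X Y Z).card
      = (Finset.univ : Finset (Finset {C // MidC a b C})).card := by
    refine Finset.card_nbij' (fun Z => gset Z) (fun S => fset X Y a b S) ?_ ?_ ?_ ?_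
    · intro Z _; exact Finset.mem_univ _
    · intro S _
      simp only [Finset.mem_coe, Finset.mem_filter, Finset.mem_univ, true_and]
      exact intertwining_fset good S
    · intro Z hZ
      simp only [Finset.mem_coe, Finset.mem_filter, Finset.mem_univ, true_and] at hZ
      exact fset_gset hZ
    · intro S _; exact gset_fset S
  rw [hbij, Finset.card_univ, Fintype.card_finset, phi_eq, Nat.card_eq_fintype_card]

end

end PtnAux

/-- over any semiring, `ā ⬝ b̄ = 2^{Φ(a,b)} • \overline{ab}`. -/
theorem ptn_matrix_mul_eq_twist (K : Type) [Semiring K] {m n t : ℕ}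
    (a : Ptn m n) (b : Ptn n t) :
    ptnMatrix K a * ptnMatrix K b
      = ((2 ^ Phi a b : ℕ) : K) • ptnMatrix K (ptnMul a b) ∧
    ∀ (X : Finset (Fin m)) (Y : Finset (Fin t)),
      (ptnMatrix K a * ptnMatrix K b) X Y =
        if IsUnionOfBlocks (ptnMul a b) X Y then ((2 ^ Phi a b : ℕ) : K) else 0 := by
  classical
  have entry : ∀ (X : Finset (Fin m)) (Y : Finset (Fin t)),
      (ptnMatrix K a * ptnMatrix K b) X Y =
        if IsUnionOfBlocks (ptnMul a b) X Y then ((2 ^ Phi a b : ℕ) : K) else 0 := by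
    intro X Y
    rw [Matrix.mul_apply]
    have hterm : ∀ Z : Finset (Fin n),
        ptnMatrix K a X Z * ptnMatrix K b Z Y
          = if Intertwining a b X Y Z then (1 : K) else 0 := by
      intro Z
      simp only [ptnMatrix, Matrix.of_apply, Intertwining]
      split_ifs <;> simp_all
    rw [Finset.sum_congr rfl fun Z _ => hterm Z, Finset.sum_boole]
    by_cases good : IsUnionOfBlocks (ptnMul a b) X Y
    · rw [if_pos good, PtnAux.card_intertwining good]
    · rw [if_neg good]
      have hempty : (Finset.univ.filter fun Z : Finset (Fin n) =>
          Intertwining a b X Y Z) = ∅ := by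
        rw [Finset.filter_eq_empty_iff]
        intro Z _ h
        exact good (PtnAux.good_of_intertwining h)
      rw [hempty]
      simp
  refine ⟨?_, entry⟩
  ext X Y
  rw [entry]
  simp only [Matrix.smul_apply, ptnMatrix, Matrix.of_apply, smul_eq_mul, mul_ite,
    mul_one, mul_zero]
end

section
/- Let K be a semiring satisfying CharZero (the canonical map ℕ → K is injective). Then for all m, n : ℕ, the map from ℕ × P_{m,n} to Matrix (Finset (Fin m)) (Finset (Fin n)) K sending (i, a) to ((2^i : ℕ) : K) • ā is injective. (Together with the composition law ā ⬝ b̄ = 2^{Φ(a,b)} • \overline{ab}, this gives a faithful representation of the twisted partition category, and in particular of each twisted partition monoid ℕ × P_{n,n} with product (i,a)(j,b) = (i+j+Φ(a,b), ab), by 2^n × 2^n matrices over K.) -/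
open Classical

lemma isUnionOfBlocks_univ {m n : ℕ} (a : Ptn m n) :
    IsUnionOfBlocks a Finset.univ Finset.univ := by
  intro u v _
  constructor <;> intro _ <;>
  · rcases v with j | j <;> rcases u with i | i <;>
      first
        | exact Or.inl ⟨_, by simp, rfl⟩
        | exact Or.inr ⟨_, by simp, rfl⟩

/-- The block of `u` as a pair of finsets. -/
noncomputable def blockX {m n : ℕ} (a : Ptn m n) (u : Fin m ⊕ Fin n) : Finset (Fin m) :=
  Finset.univ.filter fun i => a.r u (Sum.inl i)

noncomputable def blockY {m n : ℕ} (a : Ptn m n) (u : Fin m ⊕ Fin n) : Finset (Fin n) :=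
  Finset.univ.filter fun j => a.r u (Sum.inr j)

lemma mem_block_iff {m n : ℕ} (a : Ptn m n) (u p : Fin m ⊕ Fin n) :
    p ∈ Sum.inl '' ((blockX a u : Finset (Fin m)) : Set (Fin m)) ∪
        Sum.inr '' ((blockY a u : Finset (Fin n)) : Set (Fin n)) ↔ a.r u p := by
  rcases p with i | j
  · simp [blockX, blockY]
  · simp [blockX, blockY]

lemma isUnionOfBlocks_block {m n : ℕ} (a : Ptn m n) (u : Fin m ⊕ Fin n) :
    IsUnionOfBlocks a (blockX a u) (blockY a u) := by
  intro p q hpq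
  rw [mem_block_iff, mem_block_iff]
  exact ⟨fun h => a.trans h hpq, fun h => a.trans h (a.symm hpq)⟩

lemma ptn_ext_of_union {m n : ℕ} (a b : Ptn m n)
    (h : ∀ X Y, IsUnionOfBlocks a X Y ↔ IsUnionOfBlocks b X Y) : a = b := by
  have key : ∀ (a b : Ptn m n),
      (∀ X Y, IsUnionOfBlocks a X Y ↔ IsUnionOfBlocks b X Y) →
      ∀ u v, a.r u v → b.r u v := by
    intro a b h u v huv
    have hb : IsUnionOfBlocks a (blockX b u) (blockY b u) :=
      (h _ _).mpr (isUnionOfBlocks_block b u)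
    have := (hb u v huv).mp ((mem_block_iff b u u).mpr (b.refl u))
    exact (mem_block_iff b u v).mp this
  ext u v
  exact ⟨key a b h u v, key b a (fun X Y => (h X Y).symm) u v⟩

/-- over a characteristic-zero semiring, `(i,a) ↦ 2^i • ā` is injective
(faithfulness of the representation of the twisted partition category). -/
theorem twisted_rep_injective (K : Type) [Semiring K] [CharZero K] (m n : ℕ) :
    Function.Injective
      (fun p : ℕ × Ptn m n => ((2 ^ p.1 : ℕ) : K) • ptnMatrix K p.2) := by
  rintro ⟨i, a⟩ ⟨j, b⟩ h
  simp only at h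
  have hent : ∀ X Y, ((2 ^ i : ℕ) : K) * ptnMatrix K a X Y
      = ((2 ^ j : ℕ) : K) * ptnMatrix K b X Y := by
    intro X Y
    have := congrFun (congrFun h X) Y
    simpa [Matrix.smul_apply, smul_eq_mul] using this
  have hpow : ∀ k : ℕ, ((2 ^ k : ℕ) : K) ≠ 0 := fun k => Nat.cast_ne_zero.mpr (by positivity)
  have hpow' : ∀ k : ℕ, (2 : K) ^ k ≠ 0 := fun k => by
    have := hpow k; simpa using this
  have hij : i = j := by
    have := hent Finset.univ Finset.univ
    rw [ptnMatrix, ptnMatrix] at this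
    simp only [Matrix.of_apply, if_pos (isUnionOfBlocks_univ a),
      if_pos (isUnionOfBlocks_univ b), mul_one] at this
    exact Nat.pow_right_injective (le_refl 2) (Nat.cast_injective this)
  have hab : a = b := by
    apply ptn_ext_of_union
    intro X Y
    have := hent X Y
    rw [ptnMatrix, ptnMatrix] at this
    simp only [Matrix.of_apply] at this
    by_cases ha : IsUnionOfBlocks a X Y <;> by_cases hb : IsUnionOfBlocks b X Y <;>
      simp [ha, hb] at this ⊢
    · exact hpow' j (by rw [hij] at this; exact this)
    · exact hpow' j this.symm
  rw [hij, hab]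
end

section
/- Let d : ℕ and let K be a ring with CharP K (2^(d+1)). Then: (i) for all a ∈ P_{m,n}, b ∈ P_{n,t} and all i, j : ℕ, (((2^i : ℕ) : K) • ā) ⬝ (((2^j : ℕ) : K) • b̄) = ((2^{i+j+Φ(a,b)} : ℕ) : K) • \overline{ab}, and this is the zero matrix whenever i + j + Φ(a,b) > d; (ii) for all m, n, the map sending a pair (i, a) with i : ℕ, i ≤ d, and a ∈ P_{m,n} to ((2^i : ℕ) : K) • ā ∈ Matrix (Finset (Fin m)) (Finset (Fin n)) K is injective on {i : ℕ // i ≤ d} × P_{m,n}. (This gives a faithful representation of the d-twisted partition category over any ring of characteristic 2^{d+1}.) -/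
open Classical

-- ============ auxiliary development ============
section Aux
variable {m n t : ℕ}

lemma mem_blockSet_iff (X : Finset (Fin m)) (Y : Finset (Fin n)) (w : Fin m ⊕ Fin n) :
    (w ∈ Sum.inl '' (X : Set (Fin m)) ∪ Sum.inr '' (Y : Set (Fin n))) ↔
      Sum.elim (· ∈ X) (· ∈ Y) w := by cases w <;> simp

lemma isUnionOfBlocks_iff_s9 (a : Ptn m n) (X : Finset (Fin m)) (Y : Finset (Fin n)) :
    IsUnionOfBlocks a X Y ↔
      ∀ u v, a.r u v → (Sum.elim (· ∈ X) (· ∈ Y) u ↔ Sum.elim (· ∈ X) (· ∈ Y) v) := by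
  simp_rw [IsUnionOfBlocks, mem_blockSet_iff]

def memB (X : Finset (Fin m)) (Y : Finset (Fin t)) (Z : Finset (Fin n)) :
    Fin m ⊕ Fin n ⊕ Fin t → Prop
  | Sum.inl i => i ∈ X
  | Sum.inr (Sum.inl j) => j ∈ Z
  | Sum.inr (Sum.inr k) => k ∈ Y

lemma memB_j1 (X : Finset (Fin m)) (Y : Finset (Fin t)) (Z : Finset (Fin n))
    (p : Fin m ⊕ Fin n) :
    memB X Y Z (Sum.map id Sum.inl p) ↔ Sum.elim (· ∈ X) (· ∈ Z) p := by cases p <;> rfl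

lemma memB_j2 (X : Finset (Fin m)) (Y : Finset (Fin t)) (Z : Finset (Fin n))
    (p : Fin n ⊕ Fin t) :
    memB X Y Z (Sum.inr p) ↔ Sum.elim (· ∈ Z) (· ∈ Y) p := by cases p <;> rfl

lemma memB_j3 (X : Finset (Fin m)) (Y : Finset (Fin t)) (Z : Finset (Fin n))
    (v : Fin m ⊕ Fin t) :
    memB X Y Z (Sum.map id Sum.inr v) ↔ Sum.elim (· ∈ X) (· ∈ Y) v := by cases v <;> rfl

def Sat (a : Ptn m n) (b : Ptn n t) (X : Finset (Fin m)) (Y : Finset (Fin t))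
    (Z : Finset (Fin n)) : Prop :=
  ∀ u v, (prodSetoid a b).r u v → (memB X Y Z u ↔ memB X Y Z v)

lemma intertwining_iff_sat (a : Ptn m n) (b : Ptn n t) (X : Finset (Fin m))
    (Y : Finset (Fin t)) (Z : Finset (Fin n)) :
    Intertwining a b X Y Z ↔ Sat a b X Y Z := by
  constructor
  · rintro ⟨hA, hB⟩
    rw [isUnionOfBlocks_iff_s9] at hA hB
    intro u v h
    induction h with
    | rel u v h =>
      rcases h with ⟨p, q, hpq, rfl, rfl⟩ | ⟨p, q, hpq, rfl, rfl⟩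
      · rw [memB_j1, memB_j1]; exact hA p q hpq
      · rw [memB_j2, memB_j2]; exact hB p q hpq
    | refl => exact Iff.rfl
    | symm _ _ _ ih => exact ih.symm
    | trans _ _ _ _ _ ih1 ih2 => exact ih1.trans ih2
  · intro hs
    constructor
    · rw [isUnionOfBlocks_iff_s9]
      intro p q hpq
      have := hs _ _ (Relation.EqvGen.rel _ _ (Or.inl ⟨p, q, hpq, rfl, rfl⟩))
      rwa [memB_j1, memB_j1] at this
    · rw [isUnionOfBlocks_iff_s9]
      intro p q hpq
      have := hs _ _ (Relation.EqvGen.rel _ _ (Or.inr ⟨p, q, hpq, rfl, rfl⟩))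
      rwa [memB_j2, memB_j2] at this

def Middle (a : Ptn m n) (b : Ptn n t) (C : Quotient (prodSetoid a b)) : Prop :=
  ∀ u, Quotient.mk (prodSetoid a b) u = C → ∃ j : Fin n, u = Sum.inr (Sum.inl j)

lemma phi_eq (a : Ptn m n) (b : Ptn n t) : Phi a b = Nat.card {C // Middle a b C} := rfl

lemma middle_no_boundary {a : Ptn m n} {b : Ptn n t} {u : Fin m ⊕ Fin n ⊕ Fin t}
    (h : Middle a b (Quotient.mk (prodSetoid a b) u)) (v : Fin m ⊕ Fin t) :
    ¬ (prodSetoid a b).r u (Sum.map id Sum.inr v) := by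
  intro hr
  obtain ⟨j, hj⟩ := h (Sum.map id Sum.inr v) (Quotient.sound ((prodSetoid a b).symm hr))
  cases v <;> simp [Sum.map] at hj

lemma not_middle_boundary (a : Ptn m n) (b : Ptn n t) (v : Fin m ⊕ Fin t) :
    ¬ Middle a b (Quotient.mk (prodSetoid a b) (Sum.map id Sum.inr v)) := by
  intro h
  obtain ⟨j, hj⟩ := h _ rfl
  cases v <;> simp [Sum.map] at hj

end Aux
-- ============ counting ============
section Count
variable {m n t : ℕ} (a : Ptn m n) (b : Ptn n t) (X : Finset (Fin m)) (Y : Finset (Fin t))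

def FF (S : Set {C // Middle a b C}) (u : Fin m ⊕ Fin n ⊕ Fin t) : Prop :=
  (∃ v : Fin m ⊕ Fin t, (prodSetoid a b).r u (Sum.map id Sum.inr v) ∧
      Sum.elim (· ∈ X) (· ∈ Y) v) ∨
  (∃ h : Middle a b (Quotient.mk (prodSetoid a b) u), (⟨_, h⟩ : {C // Middle a b C}) ∈ S)

noncomputable def ZS (S : Set {C // Middle a b C}) : Finset (Fin n) :=
  Finset.univ.filter fun j => FF a b X Y S (Sum.inr (Sum.inl j))

lemma FF_congr (S : Set {C // Middle a b C}) {u u'} (h : (prodSetoid a b).r u u') :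
    FF a b X Y S u ↔ FF a b X Y S u' := by
  have hq : Quotient.mk (prodSetoid a b) u = Quotient.mk (prodSetoid a b) u' :=
    Quotient.sound h
  unfold FF
  rw [hq]
  constructor <;> rintro (⟨v, hr, hv⟩ | hs)
  · exact Or.inl ⟨v, (prodSetoid a b).trans ((prodSetoid a b).symm h) hr, hv⟩
  · exact Or.inr hs
  · exact Or.inl ⟨v, (prodSetoid a b).trans h hr, hv⟩
  · exact Or.inr hs

lemma FF_boundary (hH : IsUnionOfBlocks (ptnMul a b) X Y) (S : Set {C // Middle a b C})
    (v₀ : Fin m ⊕ Fin t) :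
    FF a b X Y S (Sum.map id Sum.inr v₀) ↔ Sum.elim (· ∈ X) (· ∈ Y) v₀ := by
  constructor
  · rintro (⟨v, hr, hv⟩ | ⟨h, _⟩)
    · exact ((isUnionOfBlocks_iff_s9 (ptnMul a b) X Y).mp hH v₀ v hr).mpr hv
    · exact absurd h (not_middle_boundary a b v₀)
  · intro hv; exact Or.inl ⟨v₀, (prodSetoid a b).refl _, hv⟩

lemma memB_ZS (hH : IsUnionOfBlocks (ptnMul a b) X Y) (S : Set {C // Middle a b C}) :
    ∀ u, memB X Y (ZS a b X Y S) u ↔ FF a b X Y S u := by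
  intro u
  match u with
  | Sum.inl i =>
    show (i ∈ X) ↔ _
    exact (FF_boundary a b X Y hH S (Sum.inl i)).symm
  | Sum.inr (Sum.inl j) =>
    show (j ∈ ZS a b X Y S) ↔ _
    simp [ZS]
  | Sum.inr (Sum.inr k) =>
    show (k ∈ Y) ↔ _
    exact (FF_boundary a b X Y hH S (Sum.inr k)).symm

lemma sat_ZS (hH : IsUnionOfBlocks (ptnMul a b) X Y) (S : Set {C // Middle a b C}) :
    Sat a b X Y (ZS a b X Y S) := fun u v h =>
  (memB_ZS a b X Y hH S u).trans ((FF_congr a b X Y S h).trans (memB_ZS a b X Y hH S v).symm)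

noncomputable def satEquiv (hH : IsUnionOfBlocks (ptnMul a b) X Y) :
    {Z : Finset (Fin n) // Sat a b X Y Z} ≃ Set {C // Middle a b C} where
  toFun Z := {C | ∃ j ∈ Z.1, Quotient.mk (prodSetoid a b) (Sum.inr (Sum.inl j)) = C.1}
  invFun S := ⟨ZS a b X Y S, sat_ZS a b X Y hH S⟩
  left_inv := by
    rintro ⟨Z, hZ⟩
    ext j
    simp only [ZS, Finset.mem_filter, Finset.mem_univ, true_and]
    unfold FF
    by_cases hm : Middle a b (Quotient.mk (prodSetoid a b) (Sum.inr (Sum.inl j)))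
    · constructor
      · rintro (⟨v, hr, hv⟩ | ⟨h, hC⟩)
        · exact absurd hr (middle_no_boundary hm v)
        · obtain ⟨j', hj'Z, hj'c⟩ := hC
          exact (hZ _ _ (Quotient.exact hj'c)).mp hj'Z
      · intro hj
        exact Or.inr ⟨hm, ⟨j, hj, rfl⟩⟩
    · have : ∃ u, Quotient.mk (prodSetoid a b) u
          = Quotient.mk (prodSetoid a b) (Sum.inr (Sum.inl j)) ∧
          ∀ j' : Fin n, u ≠ Sum.inr (Sum.inl j') := by
        by_contra hc
        push_neg at hc
        exact hm fun u hu => hc u hu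
      obtain ⟨u, hu, hne⟩ := this
      obtain ⟨v₀, rfl⟩ : ∃ v₀ : Fin m ⊕ Fin t, u = Sum.map id Sum.inr v₀ := by
        rcases u with i | (j' | k)
        · exact ⟨Sum.inl i, rfl⟩
        · exact absurd rfl (hne j')
        · exact ⟨Sum.inr k, rfl⟩
      have rel0 : (prodSetoid a b).r (Sum.inr (Sum.inl j)) (Sum.map id Sum.inr v₀) :=
        (prodSetoid a b).symm (Quotient.exact hu)
      constructor
      · rintro (⟨v, hr, hv⟩ | ⟨h, _⟩)
        · have := hZ _ _ hr
          rw [memB_j3] at this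
          exact this.mpr hv
        · exact absurd h hm
      · intro hj
        have := hZ _ _ rel0
        rw [memB_j3] at this
        exact Or.inl ⟨v₀, rel0, this.mp hj⟩
  right_inv := by
    intro S
    ext C
    obtain ⟨u, hu⟩ := Quotient.exists_rep C.1
    obtain ⟨j₀, rfl⟩ := C.2 u hu
    simp only [Set.mem_setOf_eq]
    constructor
    · rintro ⟨j, hjZ, hjC⟩
      have hjm : Middle a b (Quotient.mk (prodSetoid a b) (Sum.inr (Sum.inl j))) := by
        rw [hjC]; exact C.2
      simp only [ZS, Finset.mem_filter, Finset.mem_univ, true_and] at hjZ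
      rcases hjZ with ⟨v, hr, _⟩ | ⟨h, hS⟩
      · exact absurd hr (middle_no_boundary hjm v)
      · have : (⟨_, h⟩ : {C // Middle a b C}) = C := Subtype.ext hjC
        rwa [this] at hS
    · intro hCS
      refine ⟨j₀, ?_, hu⟩
      simp only [ZS, Finset.mem_filter, Finset.mem_univ, true_and]
      have hm : Middle a b (Quotient.mk (prodSetoid a b) (Sum.inr (Sum.inl j₀))) := by
        rw [hu]; exact C.2
      refine Or.inr ⟨hm, ?_⟩
      have : (⟨_, hm⟩ : {C // Middle a b C}) = C := Subtype.ext hu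
      rwa [this]

end Count

section Count2
variable {m n t : ℕ} (a : Ptn m n) (b : Ptn n t) (X : Finset (Fin m)) (Y : Finset (Fin t))

lemma card_sat (hH : IsUnionOfBlocks (ptnMul a b) X Y) :
    Nat.card {Z : Finset (Fin n) // Sat a b X Y Z} = 2 ^ Phi a b := by
  rw [Nat.card_congr (satEquiv a b X Y hH), phi_eq]
  haveI : Finite {C // Middle a b C} := Subtype.finite
  haveI : Fintype {C // Middle a b C} := Fintype.ofFinite _
  have e : Set {C // Middle a b C} ≃ ({C // Middle a b C} → Bool) :=
    Equiv.arrowCongr (Equiv.refl {C // Middle a b C}) Equiv.propEquivBool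
  rw [Nat.card_congr e]
  rw [Nat.card_eq_fintype_card, Nat.card_eq_fintype_card, Fintype.card_fun, Fintype.card_bool]

lemma card_filter_intertwining :
    (Finset.univ.filter fun Z : Finset (Fin n) => Intertwining a b X Y Z).card
      = if IsUnionOfBlocks (ptnMul a b) X Y then 2 ^ Phi a b else 0 := by
  split_ifs with hH
  · rw [← Fintype.card_subtype]
    rw [Fintype.card_congr (Equiv.subtypeEquivRight fun Z => intertwining_iff_sat a b X Y Z)]
    rw [← Nat.card_eq_fintype_card]
    exact card_sat a b X Y hH
  · rw [Finset.card_eq_zero, Finset.filter_eq_empty_iff]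
    intro Z _ hI
    have hsat := (intertwining_iff_sat a b X Y Z).mp hI
    rw [isUnionOfBlocks_iff_s9] at hH
    push_neg at hH
    obtain ⟨u, v, hr, hne⟩ := hH
    have := hsat _ _ hr
    rw [memB_j3, memB_j3] at this
    tauto

lemma ptnMatrix_mul (K : Type) [Ring K] :
    ptnMatrix K a * ptnMatrix K b
      = ((2 ^ Phi a b : ℕ) : K) • ptnMatrix K (ptnMul a b) := by
  ext X Y
  rw [Matrix.mul_apply]
  simp only [ptnMatrix, Matrix.of_apply, Matrix.smul_apply, smul_eq_mul]
  have step1 : ∀ Z : Finset (Fin n),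
      (if IsUnionOfBlocks a X Z then (1:K) else 0) * (if IsUnionOfBlocks b Z Y then 1 else 0)
        = if Intertwining a b X Y Z then 1 else 0 := by
    intro Z
    by_cases h1 : IsUnionOfBlocks a X Z <;> by_cases h2 : IsUnionOfBlocks b Z Y <;>
      simp [h1, h2, Intertwining]
  rw [Finset.sum_congr rfl fun Z _ => step1 Z, Finset.sum_boole,
    card_filter_intertwining a b X Y]
  split_ifs with hH <;> simp

end Count2

section Inj
variable {m n : ℕ}

lemma rel_le_of_iob {a b : Ptn m n}
    (h : ∀ X Y, IsUnionOfBlocks b X Y → IsUnionOfBlocks a X Y)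
    {u v} (huv : a.r u v) : b.r u v := by
  classical
  set X : Finset (Fin m) := Finset.univ.filter (fun i => b.r u (Sum.inl i)) with hX
  set Y : Finset (Fin n) := Finset.univ.filter (fun j => b.r u (Sum.inr j)) with hY
  have hmem : ∀ w, Sum.elim (· ∈ X) (· ∈ Y) w ↔ b.r u w := by
    intro w; cases w <;> simp [hX, hY]
  have hb : IsUnionOfBlocks b X Y := by
    rw [isUnionOfBlocks_iff_s9]
    intro p q hpq
    rw [hmem, hmem]
    exact ⟨fun h' => b.trans h' hpq, fun h' => b.trans h' (b.symm hpq)⟩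
  have ha := (isUnionOfBlocks_iff_s9 a X Y).mp (h X Y hb) u v huv
  exact (hmem v).mp (ha.mp ((hmem u).mpr (b.refl u)))

lemma ptn_ext {a b : Ptn m n}
    (h : ∀ X Y, IsUnionOfBlocks a X Y ↔ IsUnionOfBlocks b X Y) : a = b := by
  ext u v
  exact ⟨fun huv => rel_le_of_iob (fun X Y => (h X Y).mpr) huv,
         fun huv => rel_le_of_iob (fun X Y => (h X Y).mp) huv⟩

lemma iob_empty (a : Ptn m n) : IsUnionOfBlocks a ∅ ∅ := by
  intro u v _
  simp

end Inj


/-- the faithful representation of the `d`-twisted partition category over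
a ring of characteristic `2^{d+1}`. -/
theorem dtwisted_rep (d : ℕ) (K : Type) [Ring K] [CharP K (2 ^ (d + 1))] :
    (∀ (m n t : ℕ) (a : Ptn m n) (b : Ptn n t) (i j : ℕ),
      ((((2 ^ i : ℕ) : K) • ptnMatrix K a) * (((2 ^ j : ℕ) : K) • ptnMatrix K b)
          = ((2 ^ (i + j + Phi a b) : ℕ) : K) • ptnMatrix K (ptnMul a b)) ∧
      (d < i + j + Phi a b →
        (((2 ^ i : ℕ) : K) • ptnMatrix K a) * (((2 ^ j : ℕ) : K) • ptnMatrix K b) = 0)) ∧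
    (∀ m n : ℕ, Function.Injective
      (fun p : {i : ℕ // i ≤ d} × Ptn m n =>
        ((2 ^ (p.1 : ℕ) : ℕ) : K) • ptnMatrix K p.2)) := by
  have hmul : ∀ (m n t : ℕ) (a : Ptn m n) (b : Ptn n t) (i j : ℕ),
      ((((2 ^ i : ℕ) : K) • ptnMatrix K a) * (((2 ^ j : ℕ) : K) • ptnMatrix K b)
          = ((2 ^ (i + j + Phi a b) : ℕ) : K) • ptnMatrix K (ptnMul a b)) := by
    intro m n t a b i j
    rw [Nat.cast_smul_eq_nsmul K (2 ^ i), Nat.cast_smul_eq_nsmul K (2 ^ j),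
      Nat.cast_smul_eq_nsmul K (2 ^ (i + j + Phi a b)), Matrix.smul_mul, Matrix.mul_smul,
      ptnMatrix_mul, Nat.cast_smul_eq_nsmul K (2 ^ (Phi a b)), smul_smul, smul_smul]
    congr 1
    rw [pow_add, pow_add]
  refine ⟨fun m n t a b i j => ⟨hmul m n t a b i j, fun hd => ?_⟩, ?_⟩
  · rw [hmul m n t a b i j]
    have hz : ((2 ^ (i + j + Phi a b) : ℕ) : K) = 0 := by
      rw [CharP.cast_eq_zero_iff K (2 ^ (d + 1))]
      exact pow_dvd_pow 2 (by omega)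
    rw [hz, zero_smul]
  · rintro m n ⟨⟨i, hi⟩, a⟩ ⟨⟨j, hj⟩, b⟩ h
    simp only at h
    have hent := Matrix.ext_iff.mpr h
    have e1 : ((2 ^ i : ℕ) : K) = ((2 ^ j : ℕ) : K) := by
      have := hent ∅ ∅
      simpa [ptnMatrix, iob_empty a, iob_empty b] using this
    have hij : i = j := by
      have hmod : 2 ^ i ≡ 2 ^ j [MOD 2 ^ (d + 1)] :=
        (CharP.natCast_eq_natCast K (2 ^ (d + 1))).mp e1
      have h2 : (2 : ℕ) ^ i = 2 ^ j := by
        have l1 : (2 : ℕ) ^ i < 2 ^ (d + 1) :=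
          Nat.pow_lt_pow_right one_lt_two (by omega)
        have l2 : (2 : ℕ) ^ j < 2 ^ (d + 1) :=
          Nat.pow_lt_pow_right one_lt_two (by omega)
        calc (2:ℕ) ^ i = 2 ^ i % 2 ^ (d + 1) := (Nat.mod_eq_of_lt l1).symm
          _ = 2 ^ j % 2 ^ (d + 1) := hmod
          _ = 2 ^ j := Nat.mod_eq_of_lt l2
      exact Nat.pow_right_injective (le_refl 2) h2
    have hnz : ((2 ^ i : ℕ) : K) ≠ 0 := by
      rw [Ne, CharP.cast_eq_zero_iff K (2 ^ (d + 1)),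
        Nat.pow_dvd_pow_iff_le_right one_lt_two]
      omega
    have hab : a = b := by
      apply ptn_ext
      intro X Y
      have hxy := hent X Y
      simp only [Matrix.smul_apply, ptnMatrix, Matrix.of_apply, smul_eq_mul] at hxy
      rw [← e1] at hxy
      by_cases hP : IsUnionOfBlocks a X Y <;> by_cases hQ : IsUnionOfBlocks b X Y
      · exact iff_of_true hP hQ
      · rw [if_pos hP, if_neg hQ, mul_one, mul_zero] at hxy
        exact absurd hxy hnz
      · rw [if_neg hP, if_pos hQ, mul_zero, mul_one] at hxy
        exact absurd hxy.symm hnz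
      · exact iff_of_false hP hQ
    subst hij
    subst hab
    rfl
end

section
/- For every a ∈ P_{n,n}, the linear map v ↦ ā.mulVec v on V_n maps the subspace V_n⁺ into V_n⁺ and the subspace V_n⁻ into V_n⁻. -/
open Classical

lemma eVec_apply (K : Type) [Semiring K] {n : ℕ} (X Z : Finset (Fin n)) :
    eVec K X Z = if Z = X then 1 else 0 := by
  simp [eVec, Pi.single_apply]

lemma isUnionOfBlocks_compl {m n : ℕ} (a : Ptn m n) {X : Finset (Fin m)}
    {Y : Finset (Fin n)} (h : IsUnionOfBlocks a X Y) : IsUnionOfBlocks a Xᶜ Yᶜ := by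
  have key : ∀ (u : Fin m ⊕ Fin n),
      u ∈ Sum.inl '' (↑Xᶜ : Set (Fin m)) ∪ Sum.inr '' (↑Yᶜ : Set (Fin n)) ↔
      ¬ (u ∈ Sum.inl '' (X : Set (Fin m)) ∪ Sum.inr '' (Y : Set (Fin n))) := by
    rintro (i | j) <;> simp
  intro u v huv
  rw [key, key, not_iff_not]
  exact h u v huv

/-- The complementation equivalence on `Finset (Fin n)`. -/
def complEquiv (n : ℕ) : Finset (Fin n) ≃ Finset (Fin n) :=
  ⟨compl, compl, compl_compl, compl_compl⟩

lemma mem_Vplus_iff (K : Type) [Field K] [CharZero K] {n : ℕ}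
    (v : Finset (Fin n) → K) : v ∈ Vplus K n ↔ ∀ X, v Xᶜ = v X := by
  constructor
  · intro hv
    refine Submodule.span_induction (p := fun v _ => ∀ X, v Xᶜ = v X) ?_ ?_ ?_ ?_ hv
    · rintro _ ⟨Y, rfl⟩ X
      simp only [Pi.add_apply, eVec_apply]
      have h1 : Xᶜ = Y ↔ X = Yᶜ := by
        constructor <;> (rintro rfl; simp)
      have h2 : Xᶜ = Yᶜ ↔ X = Y := by
        constructor <;> intro h
        · simpa using congrArg compl h
        · rw [h]
      simp only [h1, h2]; ring
    · intro X; rfl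
    · intro f g _ _ hf hg X; simp [hf X, hg X]
    · intro c f _ hf X; simp [hf X]
  · intro hv
    have hrep : v = ∑ X : Finset (Fin n), (v X / 2) • (eVec K X + eVec K Xᶜ) := by
      funext Z
      rw [Finset.sum_apply]
      have : ∀ X : Finset (Fin n),
          ((v X / 2) • (eVec K X + eVec K Xᶜ)) Z =
          (if Z = X then v X / 2 else 0) + (if Z = Xᶜ then v X / 2 else 0) := by
        intro X
        simp only [Pi.smul_apply, Pi.add_apply, eVec_apply, smul_eq_mul]
        split_ifs <;> ring
      rw [Finset.sum_congr rfl fun X _ => this X, Finset.sum_add_distrib]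
      have e1 : (∑ X : Finset (Fin n), if Z = X then v X / 2 else 0) = v Z / 2 := by
        simp
      have e2 : (∑ X : Finset (Fin n), if Z = Xᶜ then v X / 2 else 0) = v Zᶜ / 2 := by
        have : ∀ X : Finset (Fin n), (Z = Xᶜ) = (Zᶜ = X) := by
          intro X
          simp only [eq_iff_iff]
          constructor <;> (rintro rfl; simp)
        simp only [this]
        simp
      rw [e1, e2, hv Z]
      ring
    rw [hrep]
    exact Submodule.sum_mem _ fun X _ => Submodule.smul_mem _ _
      (Submodule.subset_span ⟨X, rfl⟩)

lemma mem_Vminus_iff (K : Type) [Field K] [CharZero K] {n : ℕ}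
    (v : Finset (Fin n) → K) : v ∈ Vminus K n ↔ ∀ X, v Xᶜ = -v X := by
  constructor
  · intro hv
    refine Submodule.span_induction (p := fun v _ => ∀ X, v Xᶜ = -v X) ?_ ?_ ?_ ?_ hv
    · rintro _ ⟨Y, rfl⟩ X
      simp only [Pi.sub_apply, eVec_apply]
      have h1 : Xᶜ = Y ↔ X = Yᶜ := by
        constructor <;> (rintro rfl; simp)
      have h2 : Xᶜ = Yᶜ ↔ X = Y := by
        constructor <;> intro h
        · simpa using congrArg compl h
        · rw [h]
      simp only [h1, h2]; ring
    · intro X; simp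
    · intro f g _ _ hf hg X; simp [hf X, hg X]; ring
    · intro c f _ hf X; simp [hf X]
  · intro hv
    have hrep : v = ∑ X : Finset (Fin n), (v X / 2) • (eVec K X - eVec K Xᶜ) := by
      funext Z
      rw [Finset.sum_apply]
      have : ∀ X : Finset (Fin n),
          ((v X / 2) • (eVec K X - eVec K Xᶜ)) Z =
          (if Z = X then v X / 2 else 0) + (if Z = Xᶜ then -(v X / 2) else 0) := by
        intro X
        simp only [Pi.smul_apply, Pi.sub_apply, eVec_apply, smul_eq_mul]
        split_ifs <;> ring
      rw [Finset.sum_congr rfl fun X _ => this X, Finset.sum_add_distrib]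
      have e1 : (∑ X : Finset (Fin n), if Z = X then v X / 2 else 0) = v Z / 2 := by
        simp
      have e2 : (∑ X : Finset (Fin n), if Z = Xᶜ then -(v X / 2) else 0) = -(v Zᶜ / 2) := by
        have : ∀ X : Finset (Fin n), (Z = Xᶜ) = (Zᶜ = X) := by
          intro X
          simp only [eq_iff_iff]
          constructor <;> (rintro rfl; simp)
        simp only [this]
        simp
      rw [e1, e2, hv Z]
      ring
    rw [hrep]
    exact Submodule.sum_mem _ fun X _ => Submodule.smul_mem _ _
      (Submodule.subset_span ⟨X, rfl⟩)

lemma ptnMatrix_compl (K : Type) [Semiring K] {m n : ℕ} (a : Ptn m n)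
    (X : Finset (Fin m)) (Y : Finset (Fin n)) :
    ptnMatrix K a Xᶜ Yᶜ = ptnMatrix K a X Y := by
  simp only [ptnMatrix, Matrix.of_apply]
  by_cases h : IsUnionOfBlocks a X Y
  · rw [if_pos h, if_pos (isUnionOfBlocks_compl a h)]
  · rw [if_neg h, if_neg]
    intro hc
    exact h (by simpa using isUnionOfBlocks_compl a hc)

lemma mulVec_compl (K : Type) [Field K] {n : ℕ} (a : Ptn n n)
    (v : Finset (Fin n) → K) (X : Finset (Fin n)) :
    (ptnMatrix K a).mulVec v Xᶜ = ∑ Y : Finset (Fin n), ptnMatrix K a X Y * v Yᶜ := by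
  rw [Matrix.mulVec, dotProduct]
  exact Fintype.sum_equiv (complEquiv n) _ _ fun Y => by
    have h := ptnMatrix_compl K a X Yᶜ
    rw [compl_compl] at h
    simp [complEquiv, h]

/-- `ā.mulVec` maps `V_n⁺` into `V_n⁺` and `V_n⁻` into `V_n⁻`. -/
theorem mulVec_mem_Vpm (K : Type) [Field K] [CharZero K] {n : ℕ} (a : Ptn n n) :
    (∀ v ∈ Vplus K n, (ptnMatrix K a).mulVec v ∈ Vplus K n) ∧
    (∀ v ∈ Vminus K n, (ptnMatrix K a).mulVec v ∈ Vminus K n) := by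
  constructor
  · intro v hv
    rw [mem_Vplus_iff] at hv ⊢
    intro X
    rw [mulVec_compl, Matrix.mulVec, dotProduct]
    exact Finset.sum_congr rfl fun Y _ => by rw [hv Y]
  · intro v hv
    rw [mem_Vminus_iff] at hv ⊢
    intro X
    rw [mulVec_compl, Matrix.mulVec, dotProduct]
    simp only [hv, mul_neg, Finset.sum_neg_distrib]
end

section
/- Let n : ℕ and let U be a K-subspace of V_n such that ā.mulVec v ∈ U for all a ∈ P_{n,n} and all v ∈ U. If U ≠ ⊥, then V_n⁺ ≤ U or V_n⁻ ≤ U. Consequently V_n⁺ and V_n⁻ are irreducible under the action of P_{n,n}, and V_n decomposes as the direct sum V_n = V_n⁺ ⊕ V_n⁻ (i.e. V_n⁺ ⊓ V_n⁻ = ⊥ and V_n⁺ ⊔ V_n⁻ = ⊤). -/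
open Classical

-- ============ aux ============
namespace VnAux

variable {n : ℕ}

def fAB (A B : Finset (Fin n)) : Fin n ⊕ Fin n → Bool
  | Sum.inl i => decide (i ∈ A)
  | Sum.inr j => decide (j ∈ B)

def kAB (A B : Finset (Fin n)) : Ptn n n := Setoid.ker (fAB A B)

lemma mem_S_iff (X Y : Finset (Fin n)) (u : Fin n ⊕ Fin n) :
    (u ∈ Sum.inl '' (X : Set (Fin n)) ∪ Sum.inr '' (Y : Set (Fin n))) ↔
      fAB X Y u = true := by
  cases u <;> simp [fAB]

lemma isUnion_kAB_iff (A B X Y : Finset (Fin n)) :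
    IsUnionOfBlocks (kAB A B) X Y ↔
      ((X = ∅ ∧ Y = ∅) ∨ (X = Finset.univ ∧ Y = Finset.univ) ∨
       (X = A ∧ Y = B) ∨ (X = Aᶜ ∧ Y = Bᶜ)) := by
  constructor
  · intro h
    have h' : ∀ u v, fAB A B u = fAB A B v → (fAB X Y u = true ↔ fAB X Y v = true) := by
      intro u v huv
      rw [← mem_S_iff, ← mem_S_iff]
      exact h u v huv
    have step : ∀ b : Bool, (∀ u, fAB A B u = b → fAB X Y u = true) ∨
        (∀ u, fAB A B u = b → fAB X Y u = false) := by
      intro b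
      by_cases hex : ∃ u, fAB A B u = b ∧ fAB X Y u = true
      · obtain ⟨u₀, hu₀, hS₀⟩ := hex
        left
        intro u hu
        exact (h' u u₀ (hu.trans hu₀.symm)).mpr hS₀
      · right
        intro u hu
        rcases Bool.eq_false_or_eq_true (fAB X Y u) with ht | hf
        · exact absurd ⟨u, hu, ht⟩ hex
        · exact hf
    have hXmem : ∀ i : Fin n, fAB X Y (Sum.inl i) = decide (i ∈ X) := fun _ => rfl
    rcases step true with ht | ht <;> rcases step false with hf | hf
    · -- everything in S : X = univ, Y = univ
      refine Or.inr (Or.inl ⟨?_, ?_⟩) <;> (ext i; simp only [Finset.mem_univ, iff_true])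
      · rcases Bool.eq_false_or_eq_true (fAB A B (Sum.inl i)) with hb | hb
        · simpa [fAB] using ht _ hb
        · simpa [fAB] using hf _ hb
      · rcases Bool.eq_false_or_eq_true (fAB A B (Sum.inr i)) with hb | hb
        · simpa [fAB] using ht _ hb
        · simpa [fAB] using hf _ hb
    · -- true fiber in, false fiber out : X = A, Y = B
      refine Or.inr (Or.inr (Or.inl ⟨?_, ?_⟩)) <;> ext i
      · by_cases hi : i ∈ A
        · have := ht (Sum.inl i) (by simp [fAB, hi])
          simp only [fAB, decide_eq_true_eq] at this
          simp [this, hi]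
        · have := hf (Sum.inl i) (by simp [fAB, hi])
          simp only [fAB, decide_eq_false_iff_not] at this
          simp [this, hi]
      · by_cases hi : i ∈ B
        · have := ht (Sum.inr i) (by simp [fAB, hi])
          simp only [fAB, decide_eq_true_eq] at this
          simp [this, hi]
        · have := hf (Sum.inr i) (by simp [fAB, hi])
          simp only [fAB, decide_eq_false_iff_not] at this
          simp [this, hi]
    · -- true fiber out, false fiber in : X = Aᶜ, Y = Bᶜ
      refine Or.inr (Or.inr (Or.inr ⟨?_, ?_⟩)) <;> ext i
      · by_cases hi : i ∈ A
        · have := ht (Sum.inl i) (by simp [fAB, hi])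
          simp only [fAB, decide_eq_false_iff_not] at this
          simp [this, hi, Finset.mem_compl]
        · have := hf (Sum.inl i) (by simp [fAB, hi])
          simp only [fAB, decide_eq_true_eq] at this
          simp [this, hi, Finset.mem_compl]
      · by_cases hi : i ∈ B
        · have := ht (Sum.inr i) (by simp [fAB, hi])
          simp only [fAB, decide_eq_false_iff_not] at this
          simp [this, hi, Finset.mem_compl]
        · have := hf (Sum.inr i) (by simp [fAB, hi])
          simp only [fAB, decide_eq_true_eq] at this
          simp [this, hi, Finset.mem_compl]
    · -- everything out : X = ∅, Y = ∅
      refine Or.inl ⟨?_, ?_⟩ <;> (ext i; simp only [Finset.notMem_empty, iff_false])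
      · intro hi
        rcases Bool.eq_false_or_eq_true (fAB A B (Sum.inl i)) with hb | hb
        · have := ht _ hb; simp only [fAB, decide_eq_false_iff_not] at this; exact this hi
        · have := hf _ hb; simp only [fAB, decide_eq_false_iff_not] at this; exact this hi
      · intro hi
        rcases Bool.eq_false_or_eq_true (fAB A B (Sum.inr i)) with hb | hb
        · have := ht _ hb; simp only [fAB, decide_eq_false_iff_not] at this; exact this hi
        · have := hf _ hb; simp only [fAB, decide_eq_false_iff_not] at this; exact this hi
  · intro h u v huv
    have huv' : fAB A B u = fAB A B v := huv
    rw [mem_S_iff, mem_S_iff]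
    rcases h with ⟨rfl, rfl⟩ | ⟨rfl, rfl⟩ | ⟨rfl, rfl⟩ | ⟨rfl, rfl⟩
    · cases u <;> cases v <;> simp [fAB]
    · cases u <;> cases v <;> simp [fAB]
    · rw [huv']
    · cases u <;> cases v <;>
        simp_all [fAB, Finset.mem_compl]

variable (K : Type) [Field K] [CharZero K]

noncomputable def sgl (A B : Finset (Fin n)) : Matrix (Finset (Fin n)) (Finset (Fin n)) K :=
  Matrix.of fun X Y => if X = A ∧ Y = B then 1 else 0

lemma sgl_mulVec (A B : Finset (Fin n)) (v : Finset (Fin n) → K) :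
    (sgl K A B).mulVec v = v B • eVec K A := by
  funext X
  simp only [Matrix.mulVec, dotProduct, sgl, Matrix.of_apply, ite_and, eVec,
    Pi.smul_apply, smul_eq_mul, Pi.single_apply]
  by_cases hX : X = A
  · simp [hX]
  · simp [hX]

lemma compl_ne_self [Nonempty (Fin n)] (A : Finset (Fin n)) : A ≠ Aᶜ := by
  intro h
  rcases Classical.em (Classical.arbitrary (Fin n) ∈ A) with hm | hm
  · exact (Finset.mem_compl.mp (h ▸ hm)) hm
  · exact hm (h ▸ Finset.mem_compl.mpr hm)

lemma empty_ne_univ [Nonempty (Fin n)] : (∅ : Finset (Fin n)) ≠ Finset.univ := by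
  intro h
  have := Finset.mem_univ (Classical.arbitrary (Fin n))
  rw [← h] at this
  exact Finset.notMem_empty _ this


lemma ite_or2 (P1 P2 : Prop) [Decidable P1] [Decidable P2] (h : ¬(P1 ∧ P2)) :
    (if P1 ∨ P2 then (1:K) else 0) = (if P1 then (1:K) else 0) + (if P2 then 1 else 0) := by
  by_cases h1 : P1 <;> by_cases h2 : P2 <;> simp_all

lemma ite_or4 (P1 P2 P3 P4 : Prop) [Decidable P1] [Decidable P2] [Decidable P3]
    [Decidable P4] (h12 : ¬(P1 ∧ P2)) (h13 : ¬(P1 ∧ P3)) (h14 : ¬(P1 ∧ P4))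
    (h23 : ¬(P2 ∧ P3)) (h24 : ¬(P2 ∧ P4)) (h34 : ¬(P3 ∧ P4)) :
    (if P1 ∨ P2 ∨ P3 ∨ P4 then (1:K) else 0) =
      ((if P1 then (1:K) else 0) + (if P2 then 1 else 0)) + (if P3 then 1 else 0) +
        (if P4 then 1 else 0) := by
  by_cases h1 : P1 <;> by_cases h2 : P2 <;> by_cases h3 : P3 <;> by_cases h4 : P4 <;> simp_all

lemma kAB_empty_matrix_eq [Nonempty (Fin n)] :
    ptnMatrix K (kAB (∅ : Finset (Fin n)) ∅) =
      sgl K ∅ ∅ + sgl K Finset.univ Finset.univ := by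
  have hne := empty_ne_univ (n := n)
  ext X Y
  simp only [ptnMatrix, Matrix.of_apply, Matrix.add_apply, sgl, isUnion_kAB_iff,
    Finset.compl_empty]
  rw [if_congr (show ((X = ∅ ∧ Y = ∅) ∨ (X = Finset.univ ∧ Y = Finset.univ) ∨
      (X = ∅ ∧ Y = ∅) ∨ (X = Finset.univ ∧ Y = Finset.univ)) ↔
      ((X = ∅ ∧ Y = ∅) ∨ (X = Finset.univ ∧ Y = Finset.univ)) from by tauto)
      rfl rfl]
  exact ite_or2 K _ _ (by rintro ⟨⟨rfl, -⟩, ⟨h, -⟩⟩; exact hne h)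

lemma kAB_matrix_eq [Nonempty (Fin n)] (A B : Finset (Fin n))
    (hAB : ¬(A = ∅ ∧ B = ∅)) (hAB' : ¬(A = Finset.univ ∧ B = Finset.univ)) :
    ptnMatrix K (kAB A B) =
      sgl K ∅ ∅ + sgl K Finset.univ Finset.univ + sgl K A B + sgl K Aᶜ Bᶜ := by
  have hne := empty_ne_univ (n := n)
  ext X Y
  simp only [ptnMatrix, Matrix.of_apply, Matrix.add_apply, sgl, isUnion_kAB_iff]
  refine ite_or4 K _ _ _ _ ?_ ?_ ?_ ?_ ?_ ?_
  · rintro ⟨⟨rfl, -⟩, ⟨h, -⟩⟩; exact hne h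
  · rintro ⟨⟨rfl, rfl⟩, ⟨h1, h2⟩⟩; exact hAB ⟨h1.symm, h2.symm⟩
  · rintro ⟨⟨rfl, rfl⟩, ⟨h1, h2⟩⟩
    rw [eq_comm, Finset.compl_eq_empty_iff] at h1 h2
    exact hAB' ⟨h1, h2⟩
  · rintro ⟨⟨rfl, rfl⟩, ⟨h1, h2⟩⟩; exact hAB' ⟨h1.symm, h2.symm⟩
  · rintro ⟨⟨rfl, rfl⟩, ⟨h1, h2⟩⟩
    rw [eq_comm, Finset.compl_eq_univ_iff] at h1 h2
    exact hAB ⟨h1, h2⟩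
  · rintro ⟨⟨h1, -⟩, ⟨h3, -⟩⟩; exact compl_ne_self A (h1.symm.trans h3)

lemma key [Nonempty (Fin n)] (U : Submodule K (Finset (Fin n) → K))
    (hU : ∀ a : Ptn n n, ∀ v ∈ U, (ptnMatrix K a).mulVec v ∈ U)
    (A B : Finset (Fin n)) (v : Finset (Fin n) → K) (hv : v ∈ U) :
    v B • eVec K A + v Bᶜ • eVec K Aᶜ ∈ U := by
  have h0 := hU (kAB ∅ ∅) v hv
  rw [kAB_empty_matrix_eq, Matrix.add_mulVec, sgl_mulVec, sgl_mulVec] at h0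
  by_cases h1 : A = ∅ ∧ B = ∅
  · obtain ⟨rfl, rfl⟩ := h1
    simpa [Finset.compl_empty] using h0
  by_cases h2 : A = Finset.univ ∧ B = Finset.univ
  · obtain ⟨rfl, rfl⟩ := h2
    rw [Finset.compl_univ, add_comm]
    exact h0
  · have hA := hU (kAB A B) v hv
    rw [kAB_matrix_eq K A B h1 h2, Matrix.add_mulVec, Matrix.add_mulVec, Matrix.add_mulVec,
      sgl_mulVec, sgl_mulVec, sgl_mulVec, sgl_mulVec] at hA
    have := U.sub_mem hA h0
    have heq : v B • eVec K A + v Bᶜ • eVec K Aᶜ =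
        v ∅ • eVec K (∅ : Finset (Fin n)) + v Finset.univ • eVec K Finset.univ +
          v B • eVec K A + v Bᶜ • eVec K Aᶜ -
        (v ∅ • eVec K (∅ : Finset (Fin n)) + v Finset.univ • eVec K Finset.univ) := by
      abel
    rw [heq]
    exact this

lemma main1 (U : Submodule K (Finset (Fin n) → K))
    (hU : ∀ a : Ptn n n, ∀ v ∈ U, (ptnMatrix K a).mulVec v ∈ U)
    (hne : U ≠ ⊥) :
    Vplus K n ≤ U ∨ (Vminus K n ≤ U ∧ n ≠ 0) := by
  obtain ⟨v, hvU, hv0⟩ := (Submodule.ne_bot_iff U).mp hne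
  obtain ⟨B, hB⟩ : ∃ B, v B ≠ 0 := by
    by_contra h
    push_neg at h
    exact hv0 (funext h)
  rcases Nat.eq_zero_or_pos n with hn | hn
  · left
    subst hn
    have hall : ∀ X : Finset (Fin 0), X = ∅ := fun X => Finset.eq_empty_of_isEmpty X
    apply Submodule.span_le.mpr
    rintro _ ⟨A, rfl⟩
    have hv : v = v ∅ • eVec K (∅ : Finset (Fin 0)) := by
      funext X
      rw [hall X]
      simp [eVec]
    show eVec K A + eVec K Aᶜ ∈ U
    have hB' : v ∅ ≠ 0 := by rw [hall B] at hB; exact hB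
    have hx : eVec K A + eVec K Aᶜ = (2 * (v ∅)⁻¹) • v := by
      obtain rfl : A = ∅ := hall A
      have hc : (∅ᶜ : Finset (Fin 0)) = ∅ := hall _
      funext X
      obtain rfl : X = ∅ := hall X
      simp only [hc, eVec, Pi.add_apply, Pi.smul_apply, Pi.single_eq_same, smul_eq_mul]
      rw [mul_assoc, inv_mul_cancel₀ hB', mul_one]
      norm_num
    rw [hx]
    exact U.smul_mem _ hvU
  · haveI : Nonempty (Fin n) := ⟨⟨0, hn⟩⟩
    set α := v B with hα
    set β := v Bᶜ with hβ
    have hsum : ∀ A : Finset (Fin n), (α + β) • (eVec K A + eVec K Aᶜ) ∈ U := by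
      intro A
      have h1 := key K U hU A B v hvU
      have h2 := key K U hU Aᶜ B v hvU
      rw [compl_compl] at h2
      have h3 := U.add_mem h1 h2
      have heq : (α + β) • (eVec K A + eVec K Aᶜ) =
          (α • eVec K A + β • eVec K Aᶜ) + (α • eVec K Aᶜ + β • eVec K A) := by
        module
      rw [heq]
      exact h3
    have hdiff : ∀ A : Finset (Fin n), (α - β) • (eVec K A - eVec K Aᶜ) ∈ U := by
      intro A
      have h1 := key K U hU A B v hvU
      have h2 := key K U hU Aᶜ B v hvU
      rw [compl_compl] at h2
      have h3 := U.sub_mem h1 h2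
      have heq : (α - β) • (eVec K A - eVec K Aᶜ) =
          (α • eVec K A + β • eVec K Aᶜ) - (α • eVec K Aᶜ + β • eVec K A) := by
        module
      rw [heq]
      exact h3
    by_cases hpm : α + β = 0
    · right
      have hd : α - β ≠ 0 := by
        intro h
        apply hB
        have h2 : (2 : K) * α = 0 := by ring_nf; linear_combination hpm + h
        have := mul_eq_zero.mp h2
        rcases this with h' | h'
        · exact absurd h' two_ne_zero
        · exact h'
      refine ⟨Submodule.span_le.mpr ?_, by omega⟩
      rintro _ ⟨A, rfl⟩
      have hx : eVec K A - eVec K Aᶜ = (α - β)⁻¹ • ((α - β) • (eVec K A - eVec K Aᶜ)) := by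
        rw [smul_smul, inv_mul_cancel₀ hd, one_smul]
      show eVec K A - eVec K Aᶜ ∈ U
      rw [hx]
      exact U.smul_mem _ (hdiff A)
    · left
      apply Submodule.span_le.mpr
      rintro _ ⟨A, rfl⟩
      have hx : eVec K A + eVec K Aᶜ = (α + β)⁻¹ • ((α + β) • (eVec K A + eVec K Aᶜ)) := by
        rw [smul_smul, inv_mul_cancel₀ hpm, one_smul]
      show eVec K A + eVec K Aᶜ ∈ U
      rw [hx]
      exact U.smul_mem _ (hsum A)

lemma compl_eq_iff (X A : Finset (Fin n)) : Xᶜ = A ↔ X = Aᶜ :=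
  ⟨fun h => by rw [← h, compl_compl], fun h => by rw [h, compl_compl]⟩

lemma mem_Vplus_prop (v : Finset (Fin n) → K) (h : v ∈ Vplus K n) :
    ∀ X, v Xᶜ = v X := by
  induction h using Submodule.span_induction with
  | mem x hx =>
    obtain ⟨A, rfl⟩ := hx
    intro X
    simp only [Pi.add_apply, eVec, Pi.single_apply, compl_eq_iff, compl_compl]
    rw [add_comm]
  | zero => intro X; simp
  | add x y hx hy ihx ihy => intro X; simp [ihx X, ihy X]
  | smul a x hx ihx => intro X; simp [ihx X]

lemma mem_Vminus_prop (v : Finset (Fin n) → K) (h : v ∈ Vminus K n) :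
    ∀ X, v Xᶜ = -v X := by
  induction h using Submodule.span_induction with
  | mem x hx =>
    obtain ⟨A, rfl⟩ := hx
    intro X
    simp only [Pi.sub_apply, eVec, Pi.single_apply, compl_eq_iff, compl_compl]
    ring
  | zero => intro X; simp
  | add x y hx hy ihx ihy => intro X; simp [ihx X, ihy X]; ring
  | smul a x hx ihx => intro X; simp [ihx X]

lemma inf_eq_bot : Vplus K n ⊓ Vminus K n = ⊥ := by
  rw [eq_bot_iff]
  rintro v ⟨hp, hm⟩
  simp only [Submodule.mem_bot]
  funext X
  have h1 := mem_Vplus_prop K v hp X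
  have h2 := mem_Vminus_prop K v hm X
  have : (2 : K) * v X = 0 := by rw [two_mul]; nth_rewrite 1 [← h1]; rw [h2]; ring
  rcases mul_eq_zero.mp this with h | h
  · exact absurd h two_ne_zero
  · simpa using h

lemma eVec_mem_sup (X : Finset (Fin n)) : eVec K X ∈ Vplus K n ⊔ Vminus K n := by
  have h1 : eVec K X + eVec K Xᶜ ∈ Vplus K n ⊔ Vminus K n :=
    Submodule.mem_sup_left (Submodule.subset_span ⟨X, rfl⟩)
  have h2 : eVec K X - eVec K Xᶜ ∈ Vplus K n ⊔ Vminus K n :=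
    Submodule.mem_sup_right (Submodule.subset_span ⟨X, rfl⟩)
  have h3 := Submodule.smul_mem _ ((2 : K)⁻¹) (Submodule.add_mem _ h1 h2)
  have heq : (2 : K)⁻¹ • ((eVec K X + eVec K Xᶜ) + (eVec K X - eVec K Xᶜ)) = eVec K X := by
    have : (eVec K X + eVec K Xᶜ) + (eVec K X - eVec K Xᶜ) = (2 : K) • eVec K X := by
      module
    rw [this, smul_smul, inv_mul_cancel₀ (two_ne_zero), one_smul]
  rwa [heq] at h3
  
lemma sup_eq_top : Vplus K n ⊔ Vminus K n = ⊤ := by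
  rw [eq_top_iff]
  intro v _
  rw [pi_eq_sum_univ v]
  apply Submodule.sum_mem
  intro X _
  have : (fun j => if X = j then (1:K) else 0) = eVec K X := by
    funext j
    simp [eVec, Pi.single_apply, eq_comm]
  rw [this]
  exact Submodule.smul_mem _ _ (eVec_mem_sup K X)

lemma Vplus_ne_bot : Vplus K n ≠ ⊥ := by
  intro h
  have hm : eVec K (∅ : Finset (Fin n)) + eVec K (∅ : Finset (Fin n))ᶜ ∈ Vplus K n :=
    Submodule.subset_span ⟨∅, rfl⟩
  rw [h, Submodule.mem_bot] at hm
  have := congrFun hm ∅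
  simp only [Pi.add_apply, eVec, Pi.single_apply, Pi.zero_apply] at this
  split_ifs at this <;> norm_num at this

lemma Vminus_ne_bot (hn : n ≠ 0) : Vminus K n ≠ ⊥ := by
  intro h
  have hm : eVec K (∅ : Finset (Fin n)) - eVec K (∅ : Finset (Fin n))ᶜ ∈ Vminus K n :=
    Submodule.subset_span ⟨∅, rfl⟩
  rw [h, Submodule.mem_bot] at hm
  haveI : Nonempty (Fin n) := ⟨⟨0, Nat.pos_of_ne_zero hn⟩⟩
  have hc : (∅ : Finset (Fin n)) ≠ ∅ᶜ := by
    rw [Finset.compl_empty]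
    exact empty_ne_univ
  have hz := congrFun hm ∅
  simp only [Pi.sub_apply, eVec, Pi.single_apply, Pi.zero_apply] at hz
  rw [if_pos trivial] at hz
  split_ifs at hz with h2
  · exact hc h2
  · norm_num at hz

end VnAux

/-- every non-zero `P_{n,n}`-stable subspace of `V_n` contains `V_n⁺`
or `V_n⁻`; consequently `V_n⁺` and `V_n⁻` are irreducible and `V_n = V_n⁺ ⊕ V_n⁻`. -/
theorem Vn_decomposition (K : Type) [Field K] [CharZero K] (n : ℕ) :
    (∀ U : Submodule K (Finset (Fin n) → K),
      (∀ (a : Ptn n n), ∀ v ∈ U, (ptnMatrix K a).mulVec v ∈ U) → U ≠ ⊥ →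
      (Vplus K n ≤ U ∨ Vminus K n ≤ U)) ∧
    (∀ U : Submodule K (Finset (Fin n) → K),
      (∀ (a : Ptn n n), ∀ v ∈ U, (ptnMatrix K a).mulVec v ∈ U) → U ≤ Vplus K n →
      U = ⊥ ∨ U = Vplus K n) ∧
    (∀ U : Submodule K (Finset (Fin n) → K),
      (∀ (a : Ptn n n), ∀ v ∈ U, (ptnMatrix K a).mulVec v ∈ U) → U ≤ Vminus K n →
      U = ⊥ ∨ U = Vminus K n) ∧
    (Vplus K n ⊓ Vminus K n = ⊥ ∧ Vplus K n ⊔ Vminus K n = ⊤) := by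
  have hinf := VnAux.inf_eq_bot K (n := n)
  have hsup := VnAux.sup_eq_top K (n := n)
  refine ⟨?_, ?_, ?_, hinf, hsup⟩
  · intro U hU hne
    rcases VnAux.main1 K U hU hne with h | ⟨h, _⟩
    · exact Or.inl h
    · exact Or.inr h
  · intro U hU hle
    by_cases hb : U = ⊥
    · exact Or.inl hb
    rcases VnAux.main1 K U hU hb with h | ⟨h, hn0⟩
    · exact Or.inr (le_antisymm hle h)
    · exfalso
      have hx : Vminus K n ≤ Vplus K n ⊓ Vminus K n := le_inf (h.trans hle) le_rfl
      rw [hinf] at hx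
      exact VnAux.Vminus_ne_bot K hn0 (le_bot_iff.mp hx)
  · intro U hU hle
    by_cases hb : U = ⊥
    · exact Or.inl hb
    rcases VnAux.main1 K U hU hb with h | ⟨h, _⟩
    · exfalso
      have hx : Vplus K n ≤ Vplus K n ⊓ Vminus K n := le_inf le_rfl (h.trans hle)
      rw [hinf] at hx
      exact VnAux.Vplus_ne_bot K (le_bot_iff.mp hx)
    · exact Or.inr (le_antisymm hle h)
end

section
/- For every n ≥ 2 there exist distinct partitions a, b ∈ P_{n,n} such that ā.mulVec v = b̄.mulVec v for all v ∈ V_n⁺, and there exist distinct partitions c, d ∈ P_{n,n} such that c̄.mulVec v = d̄.mulVec v for all v ∈ V_n⁻. (Hence neither V_n⁺ nor V_n⁻ is a faithful module for the partition monoid P_{n,n}.) -/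
open Classical

lemma eqvGen_pair {α : Type*} (p q : α) (u v : α) :
    Relation.EqvGen (fun x y => x = p ∧ y = q) u v ↔
      (u = v ∨ (u = p ∧ v = q) ∨ (u = q ∧ v = p)) := by
  constructor
  · intro h
    induction h with
    | rel x y h => exact Or.inr (Or.inl h)
    | refl x => exact Or.inl rfl
    | symm x y _ ih => tauto
    | trans x y z _ _ ih₁ ih₂ =>
        rcases ih₁ with rfl | ⟨rfl, rfl⟩ | ⟨rfl, rfl⟩ <;>
          rcases ih₂ with h | ⟨h, h'⟩ | ⟨h, h'⟩ <;> subst_vars <;> tauto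
  · rintro (rfl | ⟨rfl, rfl⟩ | ⟨rfl, rfl⟩)
    · exact Relation.EqvGen.refl _
    · exact Relation.EqvGen.rel _ _ ⟨rfl, rfl⟩
    · exact Relation.EqvGen.symm _ _ (Relation.EqvGen.rel _ _ ⟨rfl, rfl⟩)

lemma mem_inl_union_inr {m n : ℕ} (X : Finset (Fin m)) (Y : Finset (Fin n)) :
    ∀ u : Fin m ⊕ Fin n,
      (u ∈ Sum.inl '' (X : Set (Fin m)) ∪ Sum.inr '' (Y : Set (Fin n)) ↔
        Sum.elim (· ∈ X) (· ∈ Y) u)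
  | Sum.inl i => by simp
  | Sum.inr j => by simp

lemma isUnion_pair {m n : ℕ} (p q : Fin m ⊕ Fin n) (X : Finset (Fin m))
    (Y : Finset (Fin n)) :
    IsUnionOfBlocks (Relation.EqvGen.setoid fun x y => x = p ∧ y = q) X Y ↔
      (Sum.elim (· ∈ X) (· ∈ Y) p ↔ Sum.elim (· ∈ X) (· ∈ Y) q) := by
  constructor
  · intro h
    have := h p q (Relation.EqvGen.rel _ _ ⟨rfl, rfl⟩)
    rwa [mem_inl_union_inr, mem_inl_union_inr] at this
  · intro h u v huv
    rw [mem_inl_union_inr, mem_inl_union_inr]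
    rcases (eqvGen_pair p q u v).mp huv with rfl | ⟨rfl, rfl⟩ | ⟨rfl, rfl⟩
    · rfl
    · exact h
    · exact h.symm

lemma mulVec_eVec (K : Type) [Semiring K] {m n : ℕ}
    (M : Matrix (Finset (Fin m)) (Finset (Fin n)) K) (Y : Finset (Fin n)) :
    M.mulVec (eVec K Y) = fun X => M X Y := by
  funext X
  simp [eVec, Matrix.mulVec_single]

/-- for `n ≥ 2`, neither `V_n⁺` nor `V_n⁻` is a faithful module for the
partition monoid `P_{n,n}`. -/
theorem Vpm_not_faithful (K : Type) [Field K] [CharZero K] (n : ℕ) (hn : 2 ≤ n) :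
    (∃ a b : Ptn n n, a ≠ b ∧
      ∀ v ∈ Vplus K n, (ptnMatrix K a).mulVec v = (ptnMatrix K b).mulVec v) ∧
    (∃ c d : Ptn n n, c ≠ d ∧
      ∀ v ∈ Vminus K n, (ptnMatrix K c).mulVec v = (ptnMatrix K d).mulVec v) := by
  classical
  set i0 : Fin n := ⟨0, by omega⟩ with hi0
  set i1 : Fin n := ⟨1, by omega⟩ with hi1
  have hne : i0 ≠ i1 := by simp [hi0, hi1, Fin.ext_iff]
  constructor
  · -- V⁺ case
    refine ⟨Relation.EqvGen.setoid (fun x y => x = Sum.inl i0 ∧ y = Sum.inr i0),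
      Relation.EqvGen.setoid (fun x y => x = Sum.inl i0 ∧ y = Sum.inr i1), ?_, ?_⟩
    · intro hab
      have h1 : Relation.EqvGen (fun x y => x = Sum.inl i0 ∧ y = Sum.inr i0)
          (Sum.inl i0) (Sum.inr i0) := Relation.EqvGen.rel _ _ ⟨rfl, rfl⟩
      have h2 : (Relation.EqvGen.setoid
          (fun x y => x = (Sum.inl i0 : Fin n ⊕ Fin n) ∧ y = Sum.inr i0)).r
          (Sum.inl i0) (Sum.inr i0) := h1
      rw [hab] at h2
      rcases (eqvGen_pair _ _ _ _).mp h2 with h | ⟨h, h'⟩ | ⟨h, h'⟩ <;>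
        simp_all
    · intro v hv
      have key : ∀ Y : Finset (Fin n),
          (ptnMatrix K (Relation.EqvGen.setoid
            (fun x y => x = (Sum.inl i0 : Fin n ⊕ Fin n) ∧ y = Sum.inr i0))).mulVec
              (eVec K Y + eVec K Yᶜ) =
          (ptnMatrix K (Relation.EqvGen.setoid
            (fun x y => x = (Sum.inl i0 : Fin n ⊕ Fin n) ∧ y = Sum.inr i1))).mulVec
              (eVec K Y + eVec K Yᶜ) := by
        intro Y
        rw [Matrix.mulVec_add, Matrix.mulVec_add, mulVec_eVec, mulVec_eVec,
          mulVec_eVec, mulVec_eVec]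
        funext X
        simp only [Pi.add_apply, ptnMatrix, Matrix.of_apply, isUnion_pair, Sum.elim_inl,
          Sum.elim_inr, Finset.mem_compl]
        by_cases hX : i0 ∈ X <;> by_cases hY0 : i0 ∈ Y <;> by_cases hY1 : i1 ∈ Y <;>
          simp [hX, hY0, hY1]
      refine Submodule.span_induction ?_ ?_ ?_ ?_ hv
      · rintro _ ⟨Y, rfl⟩
        exact key Y
      · simp [Matrix.mulVec_zero]
      · intro x y _ _ hx hy
        rw [Matrix.mulVec_add, Matrix.mulVec_add, hx, hy]
      · intro r x _ hx
        rw [Matrix.mulVec_smul, Matrix.mulVec_smul, hx]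
  · -- V⁻ case
    refine ⟨Relation.EqvGen.setoid (fun x y => x = Sum.inr i0 ∧ y = Sum.inr i1),
      Relation.EqvGen.setoid (fun x y => x = Sum.inl i0 ∧ y = Sum.inl i1), ?_, ?_⟩
    · intro hcd
      have h1 : Relation.EqvGen (fun x y => x = (Sum.inr i0 : Fin n ⊕ Fin n) ∧ y = Sum.inr i1)
          (Sum.inr i0) (Sum.inr i1) := Relation.EqvGen.rel _ _ ⟨rfl, rfl⟩
      have h2 : (Relation.EqvGen.setoid
          (fun x y => x = (Sum.inr i0 : Fin n ⊕ Fin n) ∧ y = Sum.inr i1)).r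
          (Sum.inr i0) (Sum.inr i1) := h1
      rw [hcd] at h2
      rcases (eqvGen_pair _ _ _ _).mp h2 with h | ⟨h, h'⟩ | ⟨h, h'⟩ <;>
        simp_all
    · intro v hv
      have key : ∀ Y : Finset (Fin n),
          (ptnMatrix K (Relation.EqvGen.setoid
            (fun x y => x = (Sum.inr i0 : Fin n ⊕ Fin n) ∧ y = Sum.inr i1))).mulVec
              (eVec K Y - eVec K Yᶜ) =
          (ptnMatrix K (Relation.EqvGen.setoid
            (fun x y => x = (Sum.inl i0 : Fin n ⊕ Fin n) ∧ y = Sum.inl i1))).mulVec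
              (eVec K Y - eVec K Yᶜ) := by
        intro Y
        rw [Matrix.mulVec_sub, Matrix.mulVec_sub, mulVec_eVec, mulVec_eVec,
          mulVec_eVec, mulVec_eVec]
        funext X
        simp only [Pi.sub_apply, ptnMatrix, Matrix.of_apply, isUnion_pair, Sum.elim_inl,
          Sum.elim_inr, Finset.mem_compl]
        by_cases hX0 : i0 ∈ X <;> by_cases hX1 : i1 ∈ X <;>
          by_cases hY0 : i0 ∈ Y <;> by_cases hY1 : i1 ∈ Y <;>
          simp [hX0, hX1, hY0, hY1]
      refine Submodule.span_induction ?_ ?_ ?_ ?_ hv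
      · rintro _ ⟨Y, rfl⟩
        exact key Y
      · simp [Matrix.mulVec_zero]
      · intro x y _ _ hx hy
        rw [Matrix.mulVec_add, Matrix.mulVec_add, hx, hy]
      · intro r x _ hx
        rw [Matrix.mulVec_smul, Matrix.mulVec_smul, hx]
end
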